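/- arXiv:1308.0569 — 3 statements merged into one kernel-verified Lean document; each statement's English description precedes it below -/
import Mathlib

section
/- Let h_ε denote, for each ε ∈ (0,1), the unique solution of the profile problem. Then lim_{ε → 0⁺} sup_{τ ∈ [√ε, 1]} √ε · h_ε'(τ) = 0; that is, away from an O(√ε)-neighborhood of the origin the derivative of the profile is o(1)/√ε as ε → 0⁺. -/
open Set Filter Topology

lemma aux_slope_deriv_nonneg {g : ℝ → ℝ} {a b τ : ℝ} (hg : MonotoneOn g (Set.Icc a b))
    (hτ : τ ∈ Set.Ioo a b) (hdiff : DifferentiableAt ℝ g τ) : 0 ≤ deriv g τ := by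
  have hd := hdiff.hasDerivAt
  rw [hasDerivAt_iff_tendsto_slope] at hd
  have hd' : Filter.Tendsto (slope g τ) (𝓝[Set.Ioo τ b] τ) (𝓝 (deriv g τ)) :=
    hd.mono_left (nhdsWithin_mono _ (fun s hs => Set.mem_compl_singleton_iff.mpr (ne_of_gt hs.1)))
  haveI : (𝓝[Set.Ioo τ b] τ).NeBot := left_nhdsWithin_Ioo_neBot hτ.2
  refine ge_of_tendsto hd' ?_
  filter_upwards [self_mem_nhdsWithin] with s hs
  rw [slope_def_field]
  have h1 : g τ ≤ g s := hg ⟨hτ.1.le, hτ.2.le⟩ ⟨(hτ.1.trans hs.1).le, hs.2.le⟩ hs.1.le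
  have h2 : 0 < s - τ := sub_pos.mpr hs.1
  exact div_nonneg (by linarith) h2.le

lemma aux_exp_lower {y : ℝ} (hy : 0 ≤ y) : (y / 4) ^ 4 ≤ Real.exp y := by
  have h1 : y / 4 + 1 ≤ Real.exp (y / 4) := Real.add_one_le_exp _
  have h2 : (y / 4) ^ 4 ≤ (y / 4 + 1) ^ 4 := by
    apply pow_le_pow_left₀ (by positivity) (by linarith)
  refine h2.trans ?_
  have h3 : (y / 4 + 1) ^ 4 ≤ Real.exp (y / 4) ^ 4 := by
    apply pow_le_pow_left₀ (by positivity) h1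
  refine h3.trans ?_
  rw [← Real.exp_nat_mul]
  have : ((4 : ℕ) : ℝ) * (y / 4) = y := by push_cast; ring
  rw [this]

/-- `h` is a solution of the one-dimensional profile problem
`(φ h')' = φ ε⁻² f(h)` on `(0,1)` with `h 0 = 0`, `h 1 = 1`, of class `C²` on `[0,1]`. -/
def IsProfileSol (f φ : ℝ → ℝ) (ε : ℝ) (h : ℝ → ℝ) : Prop :=
  ContDiffOn ℝ 2 h (Set.Icc 0 1) ∧
  (∀ τ ∈ Set.Ioo (0 : ℝ) 1,
      deriv (fun s => φ s * deriv h s) τ = φ τ * f (h τ) / ε ^ 2) ∧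
  h 0 = 0 ∧ h 1 = 1

set_option maxHeartbeats 1000000 in
/-- `lim_{ε→0⁺} sup_{τ ∈ [√ε,1]} √ε · h_ε'(τ) = 0`, i.e. away from an
`O(√ε)`-neighborhood of the origin the derivative of the profile is `o(1)/√ε`. -/
theorem profile_derivative_small_away_from_origin
    (F f φ : ℝ → ℝ)
    -- hypotheses (H₀) on the nonlinearity
    (hF : ContDiff ℝ (⊤ : ℕ∞) F)
    (hFeven : ∀ x : ℝ, F (-x) = F x)
    (hFpos : ∀ x : ℝ, x ≠ -1 → x ≠ 1 → 0 < F x)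
    (hF1 : F 1 = 0) (hFm1 : F (-1) = 0)
    (hfF : f = deriv F)
    (hf0 : f 0 = 0) (hf1 : f 1 = 0) (hfm1 : f (-1) = 0)
    (hfneg : ∀ x ∈ Set.Ioo (0 : ℝ) 1, f x < 0)
    (hfpos : ∀ x : ℝ, 1 < x → 0 < f x)
    (hdf0 : deriv f 0 < 0) (hdf1 : 0 < deriv f 1) (hdfm1 : 0 < deriv f (-1))
    (hFconv : ∃ α ∈ Set.Ioo (0 : ℝ) 1, ∃ c > 0, ∀ x : ℝ, α ≤ x → c ≤ deriv (deriv F) x)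
    -- hypotheses on the weight φ
    (hφ : ContDiff ℝ (⊤ : ℕ∞) φ)
    (hφpos : ∀ τ ∈ Set.Icc (0 : ℝ) 1, 0 < φ τ)
    (hφmono : MonotoneOn φ (Set.Icc (0 : ℝ) 1))
    (hφconv : ConvexOn ℝ (Set.Icc (0 : ℝ) 1) φ)
    (hφ0 : 1 ≤ φ 0)
    (hdφ0 : deriv φ 0 = 0)
    (h : ℝ → ℝ → ℝ)
    (hsol : ∀ ε ∈ Set.Ioo (0 : ℝ) 1, IsProfileSol f φ ε (h ε))
    (hmono : ∀ ε ∈ Set.Ioo (0 : ℝ) 1, StrictMonoOn (h ε) (Set.Icc 0 1))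
    (hconc : ∀ ε ∈ Set.Ioo (0 : ℝ) 1, ConcaveOn ℝ (Set.Icc 0 1) (h ε)) :
    ∀ δ > (0 : ℝ), ∃ ε₀ > (0 : ℝ), ∀ ε ∈ Set.Ioo (0 : ℝ) 1, ε < ε₀ →
      ∀ τ ∈ Set.Icc (Real.sqrt ε) 1,
        |Real.sqrt ε * deriv (h ε) τ| ≤ δ := by
  intro δ hδ
  -- basic regularity of F, f, φ
  have hFs : ContDiff ℝ ((⊤ : ℕ∞) : WithTop ℕ∞) F := hF.of_le (by simp)
  have hfC : ContDiff ℝ ((⊤ : ℕ∞) : WithTop ℕ∞) f := by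
    rw [hfF]; exact (contDiff_infty_iff_deriv.mp hFs).2
  have hfdiff : Differentiable ℝ f := hfC.differentiable (by simp)
  have hFdiff : Differentiable ℝ F := hFs.differentiable (by simp)
  have hFd : ∀ x : ℝ, HasDerivAt F (f x) x := fun x => by
    rw [hfF]; exact (hFdiff x).hasDerivAt
  have hf'cont : Continuous (deriv f) := hfC.continuous_deriv (by exact_mod_cast le_top)
  have hFnn : ∀ x : ℝ, 0 ≤ F x := by
    intro x
    rcases eq_or_ne x (-1) with h1 | h1
    · rw [h1, hFm1]
    rcases eq_or_ne x 1 with h2 | h2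
    · rw [h2, hF1]
    · exact (hFpos x h1 h2).le
  obtain ⟨α, hαmem, c, hc, hcF⟩ := hFconv
  have hα0 : 0 < α := hαmem.1
  have hα1 : α < 1 := hαmem.2
  have hcf' : ∀ x : ℝ, α ≤ x → c ≤ deriv f x := fun x hx => by
    rw [hfF]; exact hcF x hx
  -- m : positive lower bound of F on [0, α]
  obtain ⟨x₀, hx₀mem, hx₀min⟩ := isCompact_Icc.exists_isMinOn (s := Set.Icc (0:ℝ) α)
    ⟨0, Set.left_mem_Icc.mpr hα0.le⟩ hF.continuous.continuousOn
  set m : ℝ := F x₀ with hmdef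
  have hm : 0 < m := hFpos x₀ (by intro hh; rw [hh] at hx₀mem; linarith [hx₀mem.1])
    (by intro hh; rw [hh] at hx₀mem; linarith [hx₀mem.2])
  have hmle : ∀ x ∈ Set.Icc (0:ℝ) α, m ≤ F x := fun x hx => hx₀min hx
  -- C : bound for deriv f on [0,1]
  obtain ⟨C₀, hC₀⟩ := isCompact_Icc.exists_bound_of_continuousOn (s := Set.Icc (0:ℝ) 1)
    hf'cont.continuousOn
  set C : ℝ := max C₀ 1 with hCdef
  have hC : (0:ℝ) < C := lt_of_lt_of_le one_pos (le_max_right _ _)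
  have hCb : ∀ x ∈ Set.Icc (0:ℝ) 1, |deriv f x| ≤ C := fun x hx =>
    le_trans (by rw [← Real.norm_eq_abs]; exact hC₀ x hx) (le_max_left _ _)
  -- M : bound for φ on [0,1]
  obtain ⟨xM, hxMmem, hxMmax⟩ := isCompact_Icc.exists_isMaxOn (s := Set.Icc (0:ℝ) 1)
    ⟨0, Set.left_mem_Icc.mpr zero_le_one⟩ hφ.continuous.continuousOn
  set M : ℝ := max (φ xM) 1 with hMdef
  have hM1 : (1:ℝ) ≤ M := le_max_right _ _
  have hM0 : (0:ℝ) < M := lt_of_lt_of_le one_pos hM1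
  have hMb : ∀ τ ∈ Set.Icc (0:ℝ) 1, φ τ ≤ M := fun τ hτ =>
    le_trans (hxMmax hτ) (le_max_left _ _)
  -- L : bound for deriv φ on [0,1]
  obtain ⟨L₀, hL₀⟩ := isCompact_Icc.exists_bound_of_continuousOn (s := Set.Icc (0:ℝ) 1)
    (hφ.continuous_deriv (by simp)).continuousOn
  set L : ℝ := max L₀ 1 with hLdef
  have hL1 : (1:ℝ) ≤ L := le_max_right _ _
  have hL0 : (0:ℝ) < L := lt_of_lt_of_le one_pos hL1
  have hLb : ∀ x ∈ Set.Icc (0:ℝ) 1, deriv φ x ≤ L := fun x hx =>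
    le_trans (le_trans (le_abs_self _) (by rw [← Real.norm_eq_abs]; exact hL₀ x hx))
      (le_max_left _ _)
  -- the final constant
  set B : ℝ := 16 * M ^ 2 + 256 * C * (2 * M * L + 1) / c ^ 2 with hBdef
  have hB : 0 < B := by positivity
  refine ⟨min (m / 2) (min (δ ^ 2) (δ ^ 2 / B)), by positivity, ?_⟩
  intro ε hε hεsmall τ hτmem
  have hε0 : 0 < ε := hε.1
  have hε1 : ε < 1 := hε.2
  have hεm : ε < m / 2 := lt_of_lt_of_le hεsmall (min_le_left _ _)
  have hεδ : ε < δ ^ 2 := lt_of_lt_of_le hεsmall (le_trans (min_le_right _ _) (min_le_left _ _))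
  have hεB : ε < δ ^ 2 / B :=
    lt_of_lt_of_le hεsmall (le_trans (min_le_right _ _) (min_le_right _ _))
  have hεne : (ε : ℝ) ≠ 0 := ne_of_gt hε0
  have hsol' := hsol ε hε
  have hm' := hmono ε hε
  have hcv := hconc ε hε
  set H : ℝ → ℝ := h ε with hHdef
  obtain ⟨Hcd, Heq, H0, H1⟩ := hsol'
  set r : ℝ := Real.sqrt ε with hrdef
  have hr0 : 0 < r := Real.sqrt_pos.mpr hε0
  have hrr : r * r = ε := Real.mul_self_sqrt hε0.le
  have hr1 : r < 1 := by nlinarith only [hrr, hε1, hr0]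
  have hIcc : Set.Ioo (0:ℝ) 1 ⊆ Set.Icc 0 1 := Set.Ioo_subset_Icc_self
  have hHcont : ContinuousOn H (Set.Icc 0 1) := Hcd.continuousOn
  have hmapl : ∀ s ∈ Set.Icc (0:ℝ) 1, 0 ≤ H s := fun s hs =>
    H0 ▸ hm'.monotoneOn (Set.left_mem_Icc.mpr zero_le_one) hs hs.1
  have hmapu : ∀ s ∈ Set.Icc (0:ℝ) 1, H s ≤ 1 := fun s hs =>
    H1 ▸ hm'.monotoneOn hs (Set.right_mem_Icc.mpr zero_le_one) hs.2
  have hconcs : ∀ s ∈ Set.Icc (0:ℝ) 1, s ≤ H s := by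
    intro s hs
    have h2 := hcv.2 (Set.right_mem_Icc.mpr zero_le_one) (Set.left_mem_Icc.mpr zero_le_one)
      hs.1 (by linarith [hs.2] : (0:ℝ) ≤ 1 - s) (by ring)
    simp only [smul_eq_mul, mul_one, mul_zero, add_zero, H0, H1] at h2
    linarith
  -- case split : τ = 1 or τ < 1
  rcases eq_or_lt_of_le hτmem.2 with hτ1 | hτlt
  · -- boundary case τ = 1
    subst hτ1
    by_cases hdiff : DifferentiableAt ℝ H 1
    · have hd := hdiff.hasDerivAt
      rw [hasDerivAt_iff_tendsto_slope] at hd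
      have hd' : Filter.Tendsto (slope H 1) (𝓝[Set.Ioo (0:ℝ) 1] 1) (𝓝 (deriv H 1)) :=
        hd.mono_left (nhdsWithin_mono _
          (fun s hs => Set.mem_compl_singleton_iff.mpr (ne_of_lt hs.2)))
      haveI : (𝓝[Set.Ioo (0:ℝ) 1] (1:ℝ)).NeBot := right_nhdsWithin_Ioo_neBot one_pos
      have h0le : 0 ≤ deriv H 1 := by
        refine ge_of_tendsto hd' ?_
        filter_upwards [self_mem_nhdsWithin] with s hs
        rw [slope_def_field]
        have h1 : H s ≤ H 1 := hm'.monotoneOn (hIcc hs) (Set.right_mem_Icc.mpr zero_le_one) hs.2.le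
        rw [show (H s - H 1) / (s - 1) = (H 1 - H s) / (1 - s) by
          rw [← neg_div_neg_eq]; ring_nf]
        exact div_nonneg (by linarith) (by linarith [hs.2])
      have h1le : deriv H 1 ≤ 1 := by
        refine le_of_tendsto hd' ?_
        filter_upwards [self_mem_nhdsWithin] with s hs
        rw [slope_def_field, H1]
        rw [show (H s - 1) / (s - 1) = (1 - H s) / (1 - s) by rw [← neg_div_neg_eq]; ring_nf]
        rw [div_le_one (by linarith [hs.2] : (0:ℝ) < 1 - s)]
        have := hconcs s (hIcc hs)
        linarith
      rw [abs_of_nonneg (mul_nonneg hr0.le h0le)]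
      have hrδ : r ≤ δ := by
        rw [hrdef]
        calc Real.sqrt ε ≤ Real.sqrt (δ ^ 2) := Real.sqrt_le_sqrt hεδ.le
        _ = δ := Real.sqrt_sq hδ.le
      have : r * deriv H 1 ≤ r * 1 := mul_le_mul_of_nonneg_left h1le hr0.le
      linarith
    · rw [deriv_zero_of_not_differentiableAt hdiff, mul_zero, abs_zero]
      exact hδ.le
  -- main case : τ ∈ [√ε, 1)
  have hτI : τ ∈ Set.Ioo (0:ℝ) 1 := ⟨lt_of_lt_of_le hr0 hτmem.1, hτlt⟩
  -- differentiability facts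
  have hHd : ∀ s ∈ Set.Ioo (0:ℝ) 1, DifferentiableAt ℝ H s := by
    intro s hs
    exact (Hcd.differentiableOn (by norm_num)).differentiableAt (Icc_mem_nhds hs.1 hs.2)
  have hHc2 : ContDiffOn ℝ 2 H (Set.Ioo 0 1) := Hcd.mono hIcc
  have hH'c1 : ContDiffOn ℝ 1 (deriv H) (Set.Ioo 0 1) :=
    hHc2.deriv_of_isOpen isOpen_Ioo (by norm_num)
  have hH'd : ∀ s ∈ Set.Ioo (0:ℝ) 1, DifferentiableAt ℝ (deriv H) s := fun s hs =>
    (hH'c1.differentiableOn one_ne_zero).differentiableAt (isOpen_Ioo.mem_nhds hs)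
  have hH'cont : ContinuousOn (deriv H) (Set.Ioo 0 1) := hH'c1.continuousOn
  have hH'0 : ∀ s ∈ Set.Ioo (0:ℝ) 1, 0 ≤ deriv H s := fun s hs =>
    aux_slope_deriv_nonneg hm'.monotoneOn hs (hHd s hs)
  have hφd : ∀ s : ℝ, DifferentiableAt ℝ φ s := fun s =>
    (hφ.differentiable (by simp)).differentiableAt
  have hφ'0 : ∀ s ∈ Set.Ioo (0:ℝ) 1, 0 ≤ deriv φ s := fun s hs =>
    aux_slope_deriv_nonneg hφmono hs (hφd s)
  have hφposI : ∀ s ∈ Set.Ioo (0:ℝ) 1, 0 < φ s := fun s hs => hφpos s (hIcc hs)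
  -- unpacked equation
  have hueq : ∀ s ∈ Set.Ioo (0:ℝ) 1,
      deriv φ s * deriv H s + φ s * deriv (deriv H) s = φ s * f (H s) / ε ^ 2 := by
    intro s hs
    have hdu : HasDerivAt (fun t => φ t * deriv H t)
        (deriv φ s * deriv H s + φ s * deriv (deriv H) s) s :=
      (hφd s).hasDerivAt.mul (hH'd s hs).hasDerivAt
    rw [← hdu.deriv]
    exact Heq s hs
  have hfH : ∀ s ∈ Set.Icc (0:ℝ) 1, f (H s) ≤ 0 := by
    intro s hs
    rcases eq_or_lt_of_le (hmapl s hs) with h0 | h0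
    · rw [← h0, hf0]
    rcases eq_or_lt_of_le (hmapu s hs) with h1 | h1
    · rw [h1, hf1]
    · exact (hfneg _ ⟨h0, h1⟩).le
  have hH''le : ∀ s ∈ Set.Ioo (0:ℝ) 1, deriv (deriv H) s ≤ f (H s) / ε ^ 2 := by
    intro s hs
    have h1 := hueq s hs
    have h2 : 0 ≤ deriv φ s * deriv H s := mul_nonneg (hφ'0 s hs) (hH'0 s hs)
    have h3 : 0 < φ s := hφposI s hs
    have h4 : φ s * deriv (deriv H) s ≤ φ s * (f (H s) / ε ^ 2) := by
      have h5 : φ s * (f (H s) / ε ^ 2) = φ s * f (H s) / ε ^ 2 := by ring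
      linarith
    exact le_of_mul_le_mul_left h4 h3
  have hH''0 : ∀ s ∈ Set.Ioo (0:ℝ) 1, deriv (deriv H) s ≤ 0 := by
    intro s hs
    refine (hH''le s hs).trans ?_
    have h1 := hfH s (hIcc hs)
    have hε2 : (0:ℝ) < ε ^ 2 := by positivity
    exact div_nonpos_iff.mpr (Or.inr ⟨h1, hε2.le⟩)
  have hH'anti : AntitoneOn (deriv H) (Set.Ioo 0 1) := by
    apply antitoneOn_of_deriv_nonpos (convex_Ioo 0 1) hH'cont
    · rw [interior_Ioo]
      exact fun s hs => (hH'd s hs).differentiableWithinAt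
    · rw [interior_Ioo]
      exact fun s hs => hH''0 s hs
  have hH'bnd : ∀ s ∈ Set.Ioo (0:ℝ) 1, deriv H s * s ≤ 2 := by
    intro s hs
    have hs0 : 0 < s := hs.1
    have hsub : Set.Icc (s/2) s ⊆ Set.Icc (0:ℝ) 1 :=
      Set.Icc_subset_Icc (by linarith) hs.2.le
    have hsubI : Set.Ioo (s/2) s ⊆ Set.Ioo (0:ℝ) 1 :=
      Set.Ioo_subset_Ioo (by linarith) hs.2.le
    have hmonA : MonotoneOn (fun t => H t - deriv H s * t) (Set.Icc (s/2) s) := by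
      apply monotoneOn_of_deriv_nonneg (convex_Icc _ _)
      · exact (hHcont.mono hsub).sub (Continuous.continuousOn (by fun_prop))
      · rw [interior_Icc]
        intro t ht
        exact ((hHd t (hsubI ht)).sub (by fun_prop)).differentiableWithinAt
      · rw [interior_Icc]
        intro t ht
        have hD : HasDerivAt (fun t => H t - deriv H s * t) (deriv H t - deriv H s) t := by
          have h2' : HasDerivAt (fun t : ℝ => deriv H s * t) (deriv H s) t := by
            simpa using (hasDerivAt_id t).const_mul (deriv H s)
          exact (hHd t (hsubI ht)).hasDerivAt.sub h2'
        rw [hD.deriv]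
        have := hH'anti (hsubI ht) hs ht.2.le
        linarith
    have hcomp := hmonA ⟨le_rfl, by linarith⟩ ⟨by linarith, le_rfl⟩ (by linarith)
    simp only at hcomp
    have hb1 : H s ≤ 1 := hmapu s (hIcc hs)
    have hb2 : 0 ≤ H (s/2) := hmapl _ (hsub ⟨le_rfl, by linarith⟩)
    linarith only [hcomp, hb1, hb2]
  -- the energy functional G
  set G : ℝ → ℝ := fun s => ε ^ 2 * (φ s * deriv H s) ^ 2 / 2 - (φ s) ^ 2 * F (H s) with hGdef
  have hGD : ∀ s ∈ Set.Ioo (0:ℝ) 1,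
      HasDerivAt G (-(2 * φ s * deriv φ s * F (H s))) s := by
    intro s hs
    have hu : HasDerivAt (fun t => φ t * deriv H t) (φ s * f (H s) / ε ^ 2) s := by
      have hdu : HasDerivAt (fun t => φ t * deriv H t)
          (deriv φ s * deriv H s + φ s * deriv (deriv H) s) s :=
        (hφd s).hasDerivAt.mul (hH'd s hs).hasDerivAt
      rwa [hueq s hs] at hdu
    have hFh : HasDerivAt (fun t => F (H t)) (f (H s) * deriv H s) s := by
      have := (hFd (H s)).comp s (hHd s hs).hasDerivAt
      exact this
    have hφ2 : HasDerivAt (fun t => (φ t) ^ 2) (2 * φ s ^ 1 * deriv φ s) s :=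
      (hφd s).hasDerivAt.pow 2
    have h1 : HasDerivAt (fun t => ε ^ 2 * (φ t * deriv H t) ^ 2 / 2)
        (ε ^ 2 * (2 * (φ s * deriv H s) ^ 1 * (φ s * f (H s) / ε ^ 2)) / 2) s :=
      ((hu.pow 2).const_mul (ε ^ 2)).div_const 2
    have h2 : HasDerivAt (fun t => (φ t) ^ 2 * F (H t))
        (2 * φ s ^ 1 * deriv φ s * F (H s) + (φ s) ^ 2 * (f (H s) * deriv H s)) s :=
      hφ2.mul hFh
    have h3 : HasDerivAt G _ s := h1.sub h2
    convert h3 using 1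
    have hk : ε ^ 2 * (ε ^ 2)⁻¹ = 1 := mul_inv_cancel₀ (by positivity)
    linear_combination (-(φ s ^ 2 * deriv H s * f (H s))) * hk
  have hGanti : AntitoneOn G (Set.Ioo 0 1) := by
    apply antitoneOn_of_deriv_nonpos (convex_Ioo 0 1)
    · exact fun s hs => (hGD s hs).differentiableAt.continuousAt.continuousWithinAt
    · rw [interior_Ioo]
      exact fun s hs => (hGD s hs).differentiableAt.differentiableWithinAt
    · rw [interior_Ioo]
      intro s hs
      rw [(hGD s hs).deriv]
      have h1 := hFnn (H s)
      have h2 := hφ'0 s hs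
      have h3 := (hφposI s hs)
      have h4 : 0 ≤ φ s * deriv φ s * F (H s) :=
        mul_nonneg (mul_nonneg h3.le h2) h1
      linarith
  have hGnn : ∀ s ∈ Set.Ioo (0:ℝ) 1, 0 ≤ G s := by
    intro s hs
    have hHc1 : ContinuousWithinAt H (Set.Icc 0 1) 1 :=
      hHcont 1 (Set.right_mem_Icc.mpr zero_le_one)
    have hv : ContinuousWithinAt (fun t => -((φ t) ^ 2 * F (H t))) (Set.Icc 0 1) 1 :=
      (((hφ.continuous.continuousWithinAt).pow 2).mul
        ((hF.continuous.continuousAt).comp_continuousWithinAt hHc1)).neg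
    have hv0 : Filter.Tendsto (fun t => -((φ t) ^ 2 * F (H t))) (𝓝[Set.Ioo s 1] 1) (𝓝 0) := by
      have h2 : Filter.Tendsto (fun t => -((φ t) ^ 2 * F (H t))) (𝓝[Set.Icc 0 1] 1)
          (𝓝 (-((φ 1) ^ 2 * F (H 1)))) := hv
      rw [H1, hF1, mul_zero, neg_zero] at h2
      exact h2.mono_left (nhdsWithin_mono _ (fun t ht => hIcc ⟨lt_trans hs.1 ht.1, ht.2⟩))
    haveI : (𝓝[Set.Ioo s 1] (1:ℝ)).NeBot := right_nhdsWithin_Ioo_neBot hs.2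
    refine le_of_tendsto hv0 ?_
    filter_upwards [self_mem_nhdsWithin] with t ht
    have htI : t ∈ Set.Ioo (0:ℝ) 1 := ⟨lt_trans hs.1 ht.1, ht.2⟩
    have hG2 := hGanti hs htI ht.1.le
    have h3 : -((φ t) ^ 2 * F (H t)) ≤ G t := by
      have h4 : 0 ≤ ε ^ 2 * (φ t * deriv H t) ^ 2 / 2 := by positivity
      simp only [hGdef]
      linarith
    linarith
  have hH'sq : ∀ s ∈ Set.Ioo (0:ℝ) 1, 2 * F (H s) ≤ ε ^ 2 * (deriv H s) ^ 2 := by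
    intro s hs
    have h0 := hGnn s hs
    have hφs := hφposI s hs
    simp only [hGdef] at h0
    nlinarith only [h0, mul_pos hφs hφs]
  -- the profile reaches α before τ₁ = √ε/2
  set τ₁ : ℝ := r / 2 with hτ₁def
  have hτ₁I : τ₁ ∈ Set.Ioo (0:ℝ) 1 := ⟨by positivity, by rw [hτ₁def]; linarith⟩
  have hα₁ : α ≤ H τ₁ := by
    by_contra hcon
    push_neg at hcon
    have hsm : ∀ s ∈ Set.Ioo (0:ℝ) τ₁, Real.sqrt (2 * m) / ε ≤ deriv H s := by
      intro s hs
      have hsI : s ∈ Set.Ioo (0:ℝ) 1 := ⟨hs.1, hs.2.trans hτ₁I.2⟩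
      have hHs : H s ≤ α :=
        le_of_lt (lt_of_le_of_lt (hm'.monotoneOn (hIcc hsI) (hIcc hτ₁I) hs.2.le) hcon)
      have hFm : m ≤ F (H s) := hmle (H s) ⟨hmapl s (hIcc hsI), hHs⟩
      have h2 := hH'sq s hsI
      have h3 : Real.sqrt (2 * m) ≤ ε * deriv H s := by
        have h4 : Real.sqrt (2 * m) ≤ Real.sqrt ((ε * deriv H s) ^ 2) := by
          apply Real.sqrt_le_sqrt; linarith only [h2, hFm]
        rwa [Real.sqrt_sq (mul_nonneg hε0.le (hH'0 s hsI))] at h4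
      rw [div_le_iff₀ hε0]
      linarith [mul_comm (deriv H s) ε]
    have hmono2 : MonotoneOn (fun t => H t - Real.sqrt (2 * m) / ε * t) (Set.Icc 0 τ₁) := by
      apply monotoneOn_of_deriv_nonneg (convex_Icc _ _)
      · exact (hHcont.mono (Set.Icc_subset_Icc le_rfl hτ₁I.2.le)).sub
          (Continuous.continuousOn (by fun_prop))
      · rw [interior_Icc]
        intro t ht
        have htI : t ∈ Set.Ioo (0:ℝ) 1 := ⟨ht.1, ht.2.trans hτ₁I.2⟩
        exact ((hHd t htI).sub (by fun_prop)).differentiableWithinAt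
      · rw [interior_Icc]
        intro t ht
        have htI : t ∈ Set.Ioo (0:ℝ) 1 := ⟨ht.1, ht.2.trans hτ₁I.2⟩
        have hD : HasDerivAt (fun t => H t - Real.sqrt (2 * m) / ε * t)
            (deriv H t - Real.sqrt (2 * m) / ε) t := by
          have h2' : HasDerivAt (fun t : ℝ => Real.sqrt (2 * m) / ε * t)
              (Real.sqrt (2 * m) / ε) t := by
            simpa using (hasDerivAt_id t).const_mul (Real.sqrt (2 * m) / ε)
          exact (hHd t htI).hasDerivAt.sub h2'
        rw [hD.deriv]
        linarith [hsm t ht]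
    have hcomp := hmono2 (Set.left_mem_Icc.mpr hτ₁I.1.le) (Set.right_mem_Icc.mpr hτ₁I.1.le)
      hτ₁I.1.le
    simp only [H0, mul_zero, sub_zero, zero_sub] at hcomp
    have hHτ₁ : H τ₁ ≤ 1 := hmapu τ₁ (hIcc hτ₁I)
    have h6 : Real.sqrt (2 * m) / ε * τ₁ ≤ 1 := by linarith
    have h5 : Real.sqrt (2 * m) * τ₁ ≤ ε := by
      have h7 : Real.sqrt (2 * m) / ε * τ₁ * ε ≤ 1 * ε :=
        mul_le_mul_of_nonneg_right h6 hε0.le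
      calc Real.sqrt (2 * m) * τ₁ = Real.sqrt (2 * m) / ε * τ₁ * ε := by field_simp
      _ ≤ 1 * ε := h7
      _ = ε := one_mul ε
    have h7 : Real.sqrt (2 * m) ≤ 2 * r := by
      rw [hτ₁def] at h5
      nlinarith only [h5, hrr, hr0, Real.sqrt_nonneg (2 * m)]
    have h8 : 2 * m ≤ (2 * r) ^ 2 := by
      have h9 := Real.sq_sqrt (by positivity : (0:ℝ) ≤ 2 * m)
      nlinarith only [h7, h9, Real.sqrt_nonneg (2 * m)]
    nlinarith only [h8, hrr, hεm]
  have hHα : ∀ s ∈ Set.Icc τ₁ 1, α ≤ H s := fun s hs =>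
    hα₁.trans (hm'.monotoneOn (hIcc hτ₁I) ⟨hτ₁I.1.le.trans hs.1, hs.2⟩ hs.1)
  -- linear lower bound forcing : f(x) ≤ -c(1-x) on [α,1]
  have hflin : ∀ x : ℝ, α ≤ x → x ≤ 1 → f x ≤ -(c * (1 - x)) := by
    intro x hx hx1
    have hmon : MonotoneOn (fun y => f y - c * y) (Set.Icc α 1) := by
      apply monotoneOn_of_deriv_nonneg (convex_Icc _ _)
      · exact (hfC.continuous.continuousOn).sub (Continuous.continuousOn (by fun_prop))
      · rw [interior_Icc]
        intro y hy
        exact ((hfdiff y).sub (by fun_prop)).differentiableWithinAt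
      · rw [interior_Icc]
        intro y hy
        have hD : HasDerivAt (fun y => f y - c * y) (deriv f y - c) y := by
          have h2' : HasDerivAt (fun y : ℝ => c * y) c y := by
            simpa using (hasDerivAt_id y).const_mul c
          exact (hfdiff y).hasDerivAt.sub h2'
        rw [hD.deriv]
        linarith [hcf' y hy.1.le]
    have h2 : f x - c * x ≤ f 1 - c * 1 := hmon ⟨hx, hx1⟩ (Set.right_mem_Icc.mpr hα1.le) hx1
    rw [hf1] at h2
    linarith
  -- quadratic upper bound : F(x) ≤ C/2 (1-x)² on [0,1]
  have hflow : ∀ x ∈ Set.Icc (0:ℝ) 1, -(C * (1 - x)) ≤ f x := by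
    intro x hx
    have hmon : AntitoneOn (fun y => f y - C * y) (Set.Icc (0:ℝ) 1) := by
      apply antitoneOn_of_deriv_nonpos (convex_Icc _ _)
      · exact (hfC.continuous.continuousOn).sub (Continuous.continuousOn (by fun_prop))
      · rw [interior_Icc]
        intro y hy
        exact ((hfdiff y).sub (by fun_prop)).differentiableWithinAt
      · rw [interior_Icc]
        intro y hy
        have hD : HasDerivAt (fun y => f y - C * y) (deriv f y - C) y := by
          have h2' : HasDerivAt (fun y : ℝ => C * y) C y := by
            simpa using (hasDerivAt_id y).const_mul C
          exact (hfdiff y).hasDerivAt.sub h2'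
        rw [hD.deriv]
        have h3 := abs_le.mp (hCb y (hIcc hy))
        linarith [h3.2]
    have h2 : f 1 - C * 1 ≤ f x - C * x := hmon hx (Set.right_mem_Icc.mpr zero_le_one) hx.2
    rw [hf1] at h2
    linarith
  have hFquad : ∀ x ∈ Set.Icc (0:ℝ) 1, F x ≤ C / 2 * (1 - x) ^ 2 := by
    intro x hx
    have hmon : MonotoneOn (fun y => F y - C / 2 * (1 - y) ^ 2) (Set.Icc (0:ℝ) 1) := by
      apply monotoneOn_of_deriv_nonneg (convex_Icc _ _)
      · exact (hF.continuous.continuousOn).sub (Continuous.continuousOn (by fun_prop))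
      · rw [interior_Icc]
        intro y hy
        exact ((hFdiff y).sub (by fun_prop)).differentiableWithinAt
      · rw [interior_Icc]
        intro y hy
        have hq : HasDerivAt (fun y : ℝ => C / 2 * (1 - y) ^ 2)
            (C / 2 * (2 * (1 - y) ^ 1 * (0 - 1))) y := by
          have h1' : HasDerivAt (fun y : ℝ => 1 - y) (0 - 1) y :=
            (hasDerivAt_const y 1).sub (hasDerivAt_id y)
          exact (h1'.pow 2).const_mul (C / 2)
        have hD : HasDerivAt (fun y => F y - C / 2 * (1 - y) ^ 2) _ y := (hFd y).sub hq
        rw [hD.deriv]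
        have h3 := hflow y (hIcc hy)
        linarith only [h3]
    have h2 : F x - C / 2 * (1 - x) ^ 2 ≤ F 1 - C / 2 * (1 - 1) ^ 2 :=
      hmon hx (Set.right_mem_Icc.mpr zero_le_one) hx.2
    rw [hF1] at h2
    nlinarith only [h2]
  -- exponential decay of 1 - H past τ₁
  set X : ℝ := Real.exp (-(Real.sqrt c / (2 * r))) with hXdef
  have hX0 : 0 < X := Real.exp_pos _
  set P : ℝ → ℝ := fun s => ε ^ 2 * (deriv H s) ^ 2 - c * (1 - H s) ^ 2 with hPdef
  have hsub₁ : Set.Ioo τ₁ 1 ⊆ Set.Ioo (0:ℝ) 1 := Set.Ioo_subset_Ioo hτ₁I.1.le le_rfl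
  have hPD : ∀ s ∈ Set.Ioo τ₁ 1, HasDerivAt P
      (ε ^ 2 * (2 * deriv H s ^ 1 * deriv (deriv H) s)
        - c * (2 * (1 - H s) ^ 1 * (0 - deriv H s))) s := by
    intro s hs
    have hsI := hsub₁ hs
    have h1 := ((hH'd s hsI).hasDerivAt.pow 2).const_mul (ε ^ 2)
    have h2' : HasDerivAt (fun t => 1 - H t) (0 - deriv H s) s :=
      (hasDerivAt_const s 1).sub (hHd s hsI).hasDerivAt
    have h2 := (h2'.pow 2).const_mul c
    exact h1.sub h2
  have hPd0 : ∀ s ∈ Set.Ioo τ₁ 1, deriv P s ≤ 0 := by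
    intro s hs
    have hsI := hsub₁ hs
    rw [(hPD s hs).deriv]
    have h1 := hH''le s hsI
    have h1' : ε ^ 2 * deriv (deriv H) s ≤ f (H s) := by
      have h2 : ε ^ 2 * deriv (deriv H) s ≤ ε ^ 2 * (f (H s) / ε ^ 2) :=
        mul_le_mul_of_nonneg_left h1 (by positivity)
      rwa [show ε ^ 2 * (f (H s) / ε ^ 2) = f (H s) by field_simp] at h2
    have h2 := hflin (H s) (hHα s ⟨hs.1.le, hs.2.le⟩) (hmapu s (hIcc hsI))
    have h3 := hH'0 s hsI
    have h4 : ε ^ 2 * deriv (deriv H) s + c * (1 - H s) ≤ 0 := by linarith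
    have h5 : 0 ≤ deriv H s * -(ε ^ 2 * deriv (deriv H) s + c * (1 - H s)) :=
      mul_nonneg h3 (by linarith)
    linarith only [h5]
  have hPanti : AntitoneOn P (Set.Ioo τ₁ 1) := by
    apply antitoneOn_of_deriv_nonpos (convex_Ioo _ _)
    · exact fun s hs => (hPD s hs).differentiableAt.continuousAt.continuousWithinAt
    · rw [interior_Ioo]
      exact fun s hs => (hPD s hs).differentiableAt.differentiableWithinAt
    · rw [interior_Ioo]
      exact hPd0
  have hPnn : ∀ s ∈ Set.Ioo τ₁ 1, 0 ≤ P s := by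
    intro s hs
    have hHc1 : ContinuousWithinAt H (Set.Icc 0 1) 1 :=
      hHcont 1 (Set.right_mem_Icc.mpr zero_le_one)
    have hv : ContinuousWithinAt (fun t => -(c * (1 - H t) ^ 2)) (Set.Icc 0 1) 1 :=
      ((continuousWithinAt_const.mul ((continuousWithinAt_const.sub hHc1).pow 2))).neg
    have hv0 : Filter.Tendsto (fun t => -(c * (1 - H t) ^ 2)) (𝓝[Set.Ioo s 1] 1) (𝓝 0) := by
      have h2 : Filter.Tendsto (fun t => -(c * (1 - H t) ^ 2)) (𝓝[Set.Icc 0 1] 1)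
          (𝓝 (-(c * (1 - H 1) ^ 2))) := hv
      have h0 : -(c * (1 - H 1) ^ 2) = 0 := by rw [H1]; ring
      rw [h0] at h2
      exact h2.mono_left (nhdsWithin_mono _
        (fun t ht => hIcc ⟨lt_trans (lt_trans hτ₁I.1 hs.1) ht.1, ht.2⟩))
    haveI : (𝓝[Set.Ioo s 1] (1:ℝ)).NeBot := right_nhdsWithin_Ioo_neBot hs.2
    refine le_of_tendsto hv0 ?_
    filter_upwards [self_mem_nhdsWithin] with t ht
    have htI : t ∈ Set.Ioo τ₁ 1 := ⟨lt_trans hs.1 ht.1, ht.2⟩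
    have hP2 := hPanti hs htI ht.1.le
    have h3 : -(c * (1 - H t) ^ 2) ≤ P t := by
      have h4 : 0 ≤ ε ^ 2 * (deriv H t) ^ 2 := by positivity
      simp only [hPdef]
      linarith
    linarith
  have hslope2 : ∀ s ∈ Set.Ioo τ₁ 1, Real.sqrt c * (1 - H s) ≤ ε * deriv H s := by
    intro s hs
    have hsI := hsub₁ hs
    have h0 := hPnn s hs
    simp only [hPdef] at h0
    have h1 : Real.sqrt (c * (1 - H s) ^ 2) ≤ Real.sqrt ((ε * deriv H s) ^ 2) := by
      apply Real.sqrt_le_sqrt; linarith only [h0]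
    rwa [Real.sqrt_mul hc.le, Real.sqrt_sq (by linarith [hmapu s (hIcc hsI)] : (0:ℝ) ≤ 1 - H s),
      Real.sqrt_sq (mul_nonneg hε0.le (hH'0 s hsI))] at h1
  have hQanti : AntitoneOn (fun s => (1 - H s) * Real.exp (Real.sqrt c * s / ε))
      (Set.Ico τ₁ 1) := by
    apply antitoneOn_of_deriv_nonpos (convex_Ico _ _)
    · apply ContinuousOn.mul
      · exact continuousOn_const.sub (hHcont.mono (fun t ht => ⟨hτ₁I.1.le.trans ht.1, ht.2.le⟩))
      · exact Continuous.continuousOn (by fun_prop)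
    · rw [interior_Ico]
      intro s hs
      have hsI := hsub₁ hs
      apply DifferentiableAt.differentiableWithinAt
      exact ((differentiableAt_const _).sub (hHd s hsI)).mul (by fun_prop)
    · rw [interior_Ico]
      intro s hs
      have hsI := hsub₁ hs
      have hE : HasDerivAt (fun t : ℝ => Real.exp (Real.sqrt c * t / ε))
          (Real.exp (Real.sqrt c * s / ε) * (Real.sqrt c / ε)) s := by
        have hlin : HasDerivAt (fun t : ℝ => Real.sqrt c * t / ε) (Real.sqrt c / ε) s := by
          have h9 := ((hasDerivAt_id s).const_mul (Real.sqrt c)).div_const ε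
          simpa [mul_div_assoc] using h9
        exact (Real.hasDerivAt_exp _).comp s hlin
      have h1m : HasDerivAt (fun t => 1 - H t) (0 - deriv H s) s :=
        (hasDerivAt_const s 1).sub (hHd s hsI).hasDerivAt
      have hD : HasDerivAt (fun t => (1 - H t) * Real.exp (Real.sqrt c * t / ε)) _ s :=
        h1m.mul hE
      rw [hD.deriv]
      have h2 := hslope2 s hs
      have hexp := Real.exp_pos (Real.sqrt c * s / ε)
      have h3 : (1 - H s) * (Real.sqrt c / ε) ≤ deriv H s := by
        rw [show (1 - H s) * (Real.sqrt c / ε) = Real.sqrt c * (1 - H s) / ε by ring,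
          div_le_iff₀ hε0]
        linarith [mul_comm (deriv H s) ε]
      linarith only [mul_le_mul_of_nonneg_left h3 hexp.le]
  have hwball : ∀ s : ℝ, r ≤ s → s < 1 → 1 - H s ≤ X := by
    intro s hrs hs1
    have hsI : s ∈ Set.Ioo (0:ℝ) 1 := ⟨lt_of_lt_of_le hr0 hrs, hs1⟩
    have hτ₁s : τ₁ ≤ s := le_trans (by rw [hτ₁def]; linarith) hrs
    have hQ := hQanti ⟨le_rfl, hτ₁I.2⟩ ⟨hτ₁s, hs1⟩ hτ₁s
    have h1 : 1 - H τ₁ ≤ 1 := by linarith [hmapl τ₁ (hIcc hτ₁I)]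
    have hepos := Real.exp_pos (Real.sqrt c * s / ε)
    have hepos₁ := Real.exp_pos (Real.sqrt c * τ₁ / ε)
    have h2 : (1 - H s) * Real.exp (Real.sqrt c * s / ε) ≤ Real.exp (Real.sqrt c * τ₁ / ε) :=
      le_trans hQ (mul_le_of_le_one_left hepos₁.le h1)
    have h3 : 1 - H s ≤ Real.exp (Real.sqrt c * τ₁ / ε) / Real.exp (Real.sqrt c * s / ε) := by
      rw [le_div_iff₀ hepos]; exact h2
    rw [← Real.exp_sub] at h3
    refine h3.trans ?_
    rw [hXdef]
    apply Real.exp_le_exp.mpr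
    have hsc := Real.sqrt_nonneg c
    rw [show Real.sqrt c * τ₁ / ε - Real.sqrt c * s / ε = Real.sqrt c * (τ₁ - s) / ε by ring]
    rw [show -(Real.sqrt c / (2 * r)) = Real.sqrt c * (-(r / 2)) / ε by
      rw [← hrr]; field_simp]
    have h4 : τ₁ - s ≤ -(r / 2) := by rw [hτ₁def]; linarith
    have h5 : Real.sqrt c * (τ₁ - s) ≤ Real.sqrt c * (-(r / 2)) :=
      mul_le_mul_of_nonneg_left h4 hsc
    rw [div_le_div_iff₀ hε0 hε0]
    nlinarith only [h5, hε0]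
  -- the comparison point u
  set u : ℝ := (τ + 1) / 2 with hudef
  have huI : u ∈ Set.Ioo (0:ℝ) 1 :=
    ⟨by rw [hudef]; linarith [hτI.1], by rw [hudef]; linarith [hτI.2]⟩
  have hτu : τ < u := by rw [hudef]; linarith [hτI.2]
  have hu2 : (1:ℝ)/2 ≤ u := by rw [hudef]; linarith [hτI.1]
  have hH'u : deriv H u ≤ 4 := by
    have h1 := hH'bnd u huI
    have h2 := hH'0 u huI
    nlinarith only [h1, h2, hu2]
  -- K : bound on |G'| on [τ, u]
  set K : ℝ := M * L * C * X ^ 2 with hKdef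
  have hK0 : 0 ≤ K := by positivity
  have hFX : ∀ s : ℝ, τ ≤ s → s < 1 → F (H s) ≤ C / 2 * X ^ 2 := by
    intro s hτs hs1
    have hsI : s ∈ Set.Ioo (0:ℝ) 1 := ⟨lt_of_lt_of_le hτI.1 hτs, hs1⟩
    have h1 := hFquad (H s) ⟨hmapl s (hIcc hsI), hmapu s (hIcc hsI)⟩
    have h2 := hwball s (le_trans hτmem.1 hτs) hs1
    have h3 : (1 - H s) ^ 2 ≤ X ^ 2 :=
      pow_le_pow_left₀ (by linarith [hmapu s (hIcc hsI)]) h2 2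
    nlinarith only [h1, h3, hC]
  have hRmono : MonotoneOn (fun s => G s + K * s) (Set.Icc τ u) := by
    apply monotoneOn_of_deriv_nonneg (convex_Icc _ _)
    · intro s hs
      have hsI : s ∈ Set.Ioo (0:ℝ) 1 := ⟨lt_of_lt_of_le hτI.1 hs.1, lt_of_le_of_lt hs.2 huI.2⟩
      exact ((hGD s hsI).differentiableAt.add (by fun_prop)).continuousAt.continuousWithinAt
    · rw [interior_Icc]
      intro s hs
      have hsI : s ∈ Set.Ioo (0:ℝ) 1 := ⟨lt_trans hτI.1 hs.1, lt_trans hs.2 huI.2⟩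
      exact ((hGD s hsI).differentiableAt.add (by fun_prop)).differentiableWithinAt
    · rw [interior_Icc]
      intro s hs
      have hsI : s ∈ Set.Ioo (0:ℝ) 1 := ⟨lt_trans hτI.1 hs.1, lt_trans hs.2 huI.2⟩
      have hD : HasDerivAt (fun s => G s + K * s) (-(2 * φ s * deriv φ s * F (H s)) + K) s := by
        have h2' : HasDerivAt (fun t : ℝ => K * t) K s := by
          simpa using (hasDerivAt_id s).const_mul K
        exact (hGD s hsI).add h2'
      rw [hD.deriv]
      have b1 : φ s ≤ M := hMb s (hIcc hsI)
      have b2 : deriv φ s ≤ L := hLb s (hIcc hsI)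
      have b3 : F (H s) ≤ C / 2 * X ^ 2 := hFX s hs.1.le hsI.2
      have b4 : 0 ≤ deriv φ s := hφ'0 s hsI
      have b5 : 0 < φ s := hφposI s hsI
      have b6 : 0 ≤ F (H s) := hFnn _
      have step1 : φ s * deriv φ s ≤ M * L := mul_le_mul b1 b2 b4 hM0.le
      have step2 : φ s * deriv φ s * F (H s) ≤ M * L * (C / 2 * X ^ 2) :=
        mul_le_mul step1 b3 b6 (by positivity)
      rw [hKdef]
      linarith only [step2]
  have hcompG : G τ + K * τ ≤ G u + K * u :=
    hRmono (Set.left_mem_Icc.mpr hτu.le) (Set.right_mem_Icc.mpr hτu.le) hτu.le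
  have hGu : G u ≤ 8 * M ^ 2 * ε ^ 2 := by
    have b1 : φ u ≤ M := hMb u (hIcc huI)
    have b2 : 0 ≤ deriv H u := hH'0 u huI
    have b4 : (φ u * deriv H u) ^ 2 ≤ (M * 4) ^ 2 := by
      apply pow_le_pow_left₀ (mul_nonneg (hφpos u (hIcc huI)).le b2)
      exact mul_le_mul b1 hH'u b2 hM0.le
    have b5 : 0 ≤ (φ u) ^ 2 * F (H u) := mul_nonneg (sq_nonneg _) (hFnn _)
    simp only [hGdef]
    linarith only [mul_le_mul_of_nonneg_left b4 (sq_nonneg ε), b5]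
  have hGτl : ε ^ 2 * (deriv H τ) ^ 2 / 2 - F (H τ) ≤ G τ := by
    have b1 : 1 ≤ φ τ := hφ0.trans (hφmono (Set.left_mem_Icc.mpr zero_le_one) (hIcc hτI) hτI.1.le)
    have b2 := hH'sq τ hτI
    have b3 : 1 ≤ (φ τ) ^ 2 := by nlinarith only [b1]
    have key : 0 ≤ ((φ τ) ^ 2 - 1) * (ε ^ 2 * (deriv H τ) ^ 2 / 2 - F (H τ)) :=
      mul_nonneg (by linarith) (by linarith)
    simp only [hGdef]
    linarith only [key]
  have hFτ : F (H τ) ≤ C / 2 * X ^ 2 := hFX τ le_rfl hτI.2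
  have hXb : X ^ 2 ≤ 256 * ε ^ 2 / c ^ 2 := by
    have hy0 : 0 < Real.sqrt c := Real.sqrt_pos.mpr hc
    have hyr : 0 < Real.sqrt c / r := by positivity
    have hXsq : X ^ 2 = Real.exp (-(Real.sqrt c / r)) := by
      rw [hXdef, pow_two, ← Real.exp_add]
      congr 1
      field_simp
      ring
    have h2 := aux_exp_lower hyr.le
    have h3 : Real.exp (-(Real.sqrt c / r)) ≤ 256 / (Real.sqrt c / r) ^ 4 := by
      rw [Real.exp_neg]
      rw [show (256:ℝ) / (Real.sqrt c / r) ^ 4 = ((Real.sqrt c / r / 4) ^ 4)⁻¹ by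
        field_simp; ring]
      exact inv_anti₀ (by positivity) h2
    have h5 : (Real.sqrt c / r) ^ 2 = c / ε := by
      rw [div_pow, Real.sq_sqrt hc.le, show r ^ 2 = ε by rw [pow_two]; exact hrr]
    have h4 : (Real.sqrt c / r) ^ 4 = c ^ 2 / ε ^ 2 := by
      calc (Real.sqrt c / r) ^ 4 = ((Real.sqrt c / r) ^ 2) ^ 2 := by ring
      _ = (c / ε) ^ 2 := by rw [h5]
      _ = c ^ 2 / ε ^ 2 := by rw [div_pow]
    rw [hXsq]
    refine h3.trans ?_
    rw [h4]
    rw [show (256:ℝ) / (c ^ 2 / ε ^ 2) = 256 * ε ^ 2 / c ^ 2 by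
      field_simp]
  -- putting everything together
  clear_value m C M L B H r G τ₁ X P u K
  have hmain : ε ^ 2 * (deriv H τ) ^ 2 ≤ B * ε * ε := by
    have h2' : K * (u - τ) ≤ K * 1 :=
      mul_le_mul_of_nonneg_left (by rw [hudef]; linarith [hτI.1]) hK0
    have h1 : ε ^ 2 * (deriv H τ) ^ 2 / 2 ≤ 8 * M ^ 2 * ε ^ 2 + K + C / 2 * X ^ 2 := by
      linarith only [hGτl, hcompG, hGu, hFτ, h2']
    have h3 : K ≤ M * L * C * (256 * ε ^ 2 / c ^ 2) := by
      rw [hKdef]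
      exact mul_le_mul_of_nonneg_left hXb
        (mul_nonneg (mul_nonneg hM0.le hL0.le) hC.le)
    have h4 : C / 2 * X ^ 2 ≤ C / 2 * (256 * ε ^ 2 / c ^ 2) :=
      mul_le_mul_of_nonneg_left hXb (by linarith only [hC])
    have h5 : B * ε * ε = 16 * M ^ 2 * ε ^ 2 + 256 * C * (2 * M * L + 1) / c ^ 2 * ε ^ 2 := by
      rw [hBdef]; ring
    have hb : 2 * (M * L * C * (256 * ε ^ 2 / c ^ 2)) + 2 * (C / 2 * (256 * ε ^ 2 / c ^ 2))
        = 256 * C * (2 * M * L + 1) / c ^ 2 * ε ^ 2 := by ring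
    rw [h5]
    linarith only [h1, h3, h4, hb]
  have hτfin : 0 ≤ deriv H τ := hH'0 τ hτI
  rw [abs_of_nonneg (mul_nonneg hr0.le hτfin)]
  have hsq : (r * deriv H τ) ^ 2 ≤ δ ^ 2 := by
    have h1 : (r * deriv H τ) ^ 2 = ε * (deriv H τ) ^ 2 := by
      rw [mul_pow, show r ^ 2 = ε by rw [pow_two]; exact hrr]
    rw [h1]
    have h2 : ε * (deriv H τ) ^ 2 * ε ≤ B * ε * ε := by
      calc ε * (deriv H τ) ^ 2 * ε = ε ^ 2 * (deriv H τ) ^ 2 := by ring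
      _ ≤ B * ε * ε := hmain
    have h3 : ε * (deriv H τ) ^ 2 ≤ B * ε := le_of_mul_le_mul_right h2 hε0
    have h4 : B * ε < δ ^ 2 := by
      have h6 := (lt_div_iff₀ hB).mp hεB
      linarith [mul_comm ε B]
    linarith
  nlinarith only [hsq, hδ, mul_nonneg hr0.le hτfin]
end

section
/- For each ε ∈ (0,1) let h_ε : [−1,1] → [−1,1] be the odd extension of the unique solution of the profile problem, and let z^ε : ℝᴺ × (0,∞) → [−1,1] be differentiable in the space variable with ‖∇z^ε(x,t)‖ ≤ 1 for all (x,t) ∈ ℝᴺ × (0,∞). Set u^ε(x,t) := h_ε(z^ε(x,t)). Then limsup_{ε → 0⁺} sup_{(x,t) ∈ ℝᴺ × (0,∞)} [ (ε/2) ‖∇u^ε(x,t)‖² − ε^{-1} F(u^ε(x,t)) ] ≤ 0. -/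
open Set Filter Topology Asymptotics

/-- If all right slopes of `g` at `τ` over `(τ,1)` are at least `lo`, so is the derivative. -/
private lemma lo_le_deriv_aux {g : ℝ → ℝ} {τ p lo : ℝ} (hτ1 : τ < 1)
    (hp : HasDerivAt g p τ)
    (hb : ∀ σ ∈ Set.Ioo τ 1, lo ≤ (g σ - g τ) / (σ - τ)) : lo ≤ p := by
  have hT : Tendsto (slope g τ) (𝓝[>] τ) (𝓝 p) :=
    (hasDerivAt_iff_tendsto_slope.1 hp).mono_left
      (nhdsWithin_mono τ (fun σ hσ => ne_of_gt hσ))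
  refine ge_of_tendsto hT ?_
  filter_upwards [Ioo_mem_nhdsGT_of_mem ⟨le_refl τ, hτ1⟩] with σ hσ
  rw [slope_def_field]
  exact hb σ hσ

private lemma deriv_le_hi_aux {g : ℝ → ℝ} {τ p hi : ℝ} (hτ1 : τ < 1)
    (hp : HasDerivAt g p τ)
    (hb : ∀ σ ∈ Set.Ioo τ 1, (g σ - g τ) / (σ - τ) ≤ hi) : p ≤ hi := by
  have hT : Tendsto (slope g τ) (𝓝[>] τ) (𝓝 p) :=
    (hasDerivAt_iff_tendsto_slope.1 hp).mono_left
      (nhdsWithin_mono τ (fun σ hσ => ne_of_gt hσ))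
  refine le_of_tendsto hT ?_
  filter_upwards [Ioo_mem_nhdsGT_of_mem ⟨le_refl τ, hτ1⟩] with σ hσ
  rw [slope_def_field]
  exact hb σ hσ

/-- Bounds for the left derivative at `1` from slope bounds over `(0,1)`. -/
private lemma derivWithin_bounds_at_one {g : ℝ → ℝ} {q lo hi : ℝ}
    (hq : HasDerivWithinAt g q (Set.Icc (-1 : ℝ) 1) 1)
    (hb : ∀ σ ∈ Set.Ioo (0 : ℝ) 1,
      lo ≤ (g σ - g 1) / (σ - 1) ∧ (g σ - g 1) / (σ - 1) ≤ hi) :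
    lo ≤ q ∧ q ≤ hi := by
  have hsub : Set.Ioo (0 : ℝ) 1 ⊆ Set.Icc (-1 : ℝ) 1 \ {1} := fun σ hσ =>
    ⟨⟨by linarith [hσ.1], hσ.2.le⟩, by simpa using ne_of_lt hσ.2⟩
  have hne : (𝓝[Set.Ioo (0 : ℝ) 1] (1 : ℝ)).NeBot := by
    rw [← mem_closure_iff_nhdsWithin_neBot, closure_Ioo (by norm_num : (0 : ℝ) ≠ 1)]
    constructor <;> norm_num
  have hT : Tendsto (slope g 1) (𝓝[Set.Ioo (0 : ℝ) 1] 1) (𝓝 q) :=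
    (hasDerivWithinAt_iff_tendsto_slope.1 hq).mono_left (nhdsWithin_mono 1 hsub)
  constructor
  · refine ge_of_tendsto hT ?_
    filter_upwards [eventually_mem_nhdsWithin] with σ hσ
    rw [slope_def_field]; exact (hb σ hσ).1
  · refine le_of_tendsto hT ?_
    filter_upwards [eventually_mem_nhdsWithin] with σ hσ
    rw [slope_def_field]; exact (hb σ hσ).2

/-- Key pointwise estimate for the profile: the (squared) discrepancy
`ε² h'(τ)²/2 - F(h τ)` is at most `(1/2 + M) ε²` on `(-1,1)`. -/
private lemma profile_key (F f φ : ℝ → ℝ)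
    (hF : ContDiff ℝ (⊤ : ℕ∞) F) (hFeven : ∀ x : ℝ, F (-x) = F x)
    (hfF : f = deriv F) (hF1 : F 1 = 0)
    (hφ : ContDiff ℝ (⊤ : ℕ∞) φ) (hφpos : ∀ τ ∈ Set.Icc (0 : ℝ) 1, 0 < φ τ)
    (hφmono : MonotoneOn φ (Set.Icc (0 : ℝ) 1)) (hφ0 : 1 ≤ φ 0)
    (M : ℝ) (hM0 : 0 ≤ M) (hMs : ∀ s ∈ Set.Icc (0 : ℝ) 1, deriv φ s ≤ M * s)
    (hφ' : ∀ s ∈ Set.Ioo (0 : ℝ) 1, 0 ≤ deriv φ s)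
    (ε : ℝ) (hε : ε ∈ Set.Ioo (0 : ℝ) 1) (h : ℝ → ℝ)
    (hsol : IsProfileSol f φ ε h)
    (hodd : ∀ τ : ℝ, h (-τ) = -(h τ))
    (hC1 : ContDiffOn ℝ 1 h (Set.Icc (-1) 1))
    (hmap : ∀ τ ∈ Set.Icc (-1 : ℝ) 1, h τ ∈ Set.Icc (-1 : ℝ) 1)
    (hmono : StrictMonoOn h (Set.Icc 0 1))
    (hconc : ConcaveOn ℝ (Set.Icc 0 1) h) :
    ∀ τ ∈ Set.Ioo (-1 : ℝ) 1,
      ε ^ 2 * (deriv h τ) ^ 2 / 2 - F (h τ) ≤ (1 / 2 + M) * ε ^ 2 := by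
  obtain ⟨hC2, hODE, h0, h1⟩ := hsol
  have hε0 : (0 : ℝ) < ε := hε.1
  set D := derivWithin h (Set.Icc (-1 : ℝ) 1) with hDdef
  have huD : UniqueDiffOn ℝ (Set.Icc (-1 : ℝ) 1) := uniqueDiffOn_Icc (by norm_num)
  have hDcont : ContinuousOn D (Set.Icc (-1 : ℝ) 1) :=
    hC1.continuousOn_derivWithin huD le_rfl
  have hcont : ContinuousOn h (Set.Icc (-1 : ℝ) 1) := hC1.continuousOn
  have hmemN : ∀ {σ : ℝ}, σ ∈ Set.Ioo (-1 : ℝ) 1 → Set.Icc (-1 : ℝ) 1 ∈ 𝓝 σ :=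
    fun hσ => Icc_mem_nhds hσ.1 hσ.2
  have hDeq : ∀ σ ∈ Set.Ioo (-1 : ℝ) 1, D σ = deriv h σ := fun σ hσ =>
    derivWithin_of_mem_nhds (hmemN hσ)
  have hdiffAt : ∀ σ ∈ Set.Ioo (-1 : ℝ) 1, HasDerivAt h (deriv h σ) σ := fun σ hσ =>
    ((hC1.contDiffAt (hmemN hσ)).differentiableAt one_ne_zero).hasDerivAt
  have hIccsub : Set.Icc (0 : ℝ) 1 ⊆ Set.Icc (-1 : ℝ) 1 :=
    Set.Icc_subset_Icc (by norm_num) le_rfl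
  -- h σ ≥ σ on [0,1]
  have hge : ∀ σ ∈ Set.Icc (0 : ℝ) 1, σ ≤ h σ := by
    intro σ hσ
    have key := hconc.2 (Set.left_mem_Icc.2 zero_le_one) (Set.right_mem_Icc.2 zero_le_one)
      (show (0:ℝ) ≤ 1 - σ by linarith [hσ.2]) hσ.1 (by ring : (1 - σ) + σ = 1)
    simp only [smul_eq_mul, h0, h1, mul_zero, mul_one, zero_add, add_zero] at key
    linarith [key]
  have hle1 : ∀ σ ∈ Set.Icc (0 : ℝ) 1, h σ ≤ 1 := fun σ hσ => (hmap σ (hIccsub hσ)).2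
  have hge0 : ∀ σ ∈ Set.Icc (0 : ℝ) 1, 0 ≤ h σ := fun σ hσ => le_trans hσ.1 (hge σ hσ)
  -- left derivative at 1 lies in [0,1]
  have hq : HasDerivWithinAt h (D 1) (Set.Icc (-1 : ℝ) 1) 1 :=
    ((hC1.differentiableOn one_ne_zero) 1 (by norm_num)).hasDerivWithinAt
  have hq01 : 0 ≤ D 1 ∧ D 1 ≤ 1 := by
    refine derivWithin_bounds_at_one hq ?_
    intro σ hσ
    have hσc : σ ∈ Set.Icc (0 : ℝ) 1 := ⟨hσ.1.le, hσ.2.le⟩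
    have hden : σ - 1 < 0 := by linarith [hσ.2]
    constructor
    · rw [le_div_iff_of_neg hden, h1]
      nlinarith [hle1 σ hσc]
    · rw [div_le_iff_of_neg hden, h1]
      nlinarith [hge σ hσc]
  -- the auxiliary function W and its monotonicity on (0,1)
  set W : ℝ → ℝ := fun σ => ε ^ 2 / 2 * (deriv h σ) ^ 2 - F (h σ) + ε ^ 2 * M * h σ with hWdef
  have hW : ∀ τ ∈ Set.Ioo (0 : ℝ) 1, ∃ v : ℝ, HasDerivAt W v τ ∧ 0 ≤ v := by
    intro τ hτ
    have hτ' : τ ∈ Set.Ioo (-1 : ℝ) 1 := ⟨by linarith [hτ.1], hτ.2⟩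
    have hτc : τ ∈ Set.Icc (0 : ℝ) 1 := ⟨hτ.1.le, hτ.2.le⟩
    have hp : HasDerivAt h (deriv h τ) τ := hdiffAt τ hτ'
    set p := deriv h τ with hpdef
    -- second derivative exists
    have hcd2 : ContDiffAt ℝ 2 h τ := hC2.contDiffAt (Icc_mem_nhds hτ.1 hτ.2)
    have hd2 : DifferentiableAt ℝ (deriv h) τ := by
      have h1' : ContDiffAt ℝ 1 (fderiv ℝ h) τ := hcd2.fderiv_right (by norm_num)
      have h2' : DifferentiableAt ℝ (fun s => fderiv ℝ h s 1) τ :=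
        (h1'.clm_apply contDiffAt_const).differentiableAt one_ne_zero
      have : (fun s => fderiv ℝ h s 1) = deriv h := funext fun s => fderiv_apply_one_eq_deriv
      rwa [this] at h2'
    set p' := deriv (deriv h) τ with hp'def
    have hp' : HasDerivAt (deriv h) p' τ := hd2.hasDerivAt
    -- the ODE at τ
    have hφτ : HasDerivAt φ (deriv φ τ) τ := ((hφ.differentiable (by simp)) τ).hasDerivAt
    have hprod : HasDerivAt (fun s => φ s * deriv h s) (deriv φ τ * p + φ τ * p') τ :=
      hφτ.mul hp'
    have heq : deriv φ τ * p + φ τ * p' = φ τ * f (h τ) / ε ^ 2 := by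
      rw [← hprod.deriv]; exact hODE τ hτ
    -- derivative of W
    have hFd : HasDerivAt F (f (h τ)) (h τ) := by
      rw [hfF]; exact ((hF.differentiable (by simp)) (h τ)).hasDerivAt
    have h1' : HasDerivAt (fun σ => (deriv h σ) ^ 2) (2 * p * p') τ := by
      have := hp'.fun_pow 2
      simpa using this
    have h2' : HasDerivAt (fun σ => F (h σ)) (f (h τ) * p) τ := hFd.comp τ hp
    have hWd : HasDerivAt W (ε ^ 2 / 2 * (2 * p * p') - f (h τ) * p + ε ^ 2 * M * p) τ :=
      ((h1'.const_mul (ε ^ 2 / 2)).sub h2').add (hp.const_mul (ε ^ 2 * M))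
    refine ⟨_, hWd, ?_⟩
    -- nonnegativity
    have hp0 : 0 ≤ p := by
      refine lo_le_deriv_aux hτ.2 hp ?_
      intro σ hσ
      have hσc : σ ∈ Set.Icc (0 : ℝ) 1 := ⟨by linarith [hτ.1, hσ.1], hσ.2.le⟩
      have hmm := hmono.monotoneOn hτc hσc hσ.1.le
      have hden : 0 < σ - τ := by linarith [hσ.1]
      exact div_nonneg (by linarith) hden.le
    have hpτ : τ * p ≤ h τ := by
      have hp_le : p ≤ (h τ - h 0) / (τ - 0) := by
        refine deriv_le_hi_aux hτ.2 hp ?_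
        intro σ hσ
        exact hconc.slope_anti_adjacent (Set.left_mem_Icc.2 zero_le_one)
          ⟨by linarith [hτ.1, hσ.1], hσ.2.le⟩ hτ.1 hσ.1
      rw [h0, sub_zero, sub_zero] at hp_le
      have hτne : τ ≠ 0 := ne_of_gt hτ.1
      calc τ * p ≤ τ * ((h τ) / τ) := by
            exact mul_le_mul_of_nonneg_left hp_le hτ.1.le
        _ = h τ := by field_simp
    have hφ1 : 1 ≤ φ τ := le_trans hφ0 (hφmono (Set.left_mem_Icc.2 zero_le_one) hτc hτ.1.le)
    have hφ'nn : 0 ≤ deriv φ τ := hφ' τ hτ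
    have hratio : deriv φ τ * p / φ τ ≤ M := by
      have hnum0 : 0 ≤ deriv φ τ * p := mul_nonneg hφ'nn hp0
      have hstep : deriv φ τ * p ≤ M := by
        have e1 : deriv φ τ * p ≤ M * τ * p :=
          mul_le_mul_of_nonneg_right (hMs τ hτc) hp0
        have e2 : M * τ * p ≤ M * h τ := by
          have := mul_le_mul_of_nonneg_left hpτ hM0
          nlinarith
        have e3 : M * h τ ≤ M := by nlinarith [hle1 τ hτc]
        linarith
      calc deriv φ τ * p / φ τ ≤ deriv φ τ * p := div_le_self hnum0 hφ1
        _ ≤ M := hstep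
    -- compute the value
    have hφpos' : 0 < φ τ := hφpos τ hτc
    have hp'eq : p' = f (h τ) / ε ^ 2 - deriv φ τ * p / φ τ := by
      have hφne : φ τ ≠ 0 := ne_of_gt hφpos'
      have hεne : (ε : ℝ) ^ 2 ≠ 0 := by positivity
      field_simp at heq ⊢
      nlinarith [heq]
    have hvaleq : ε ^ 2 / 2 * (2 * p * p') - f (h τ) * p + ε ^ 2 * M * p
        = ε ^ 2 * p * (M - deriv φ τ * p / φ τ) := by
      rw [hp'eq]
      have hεne : (ε : ℝ) ^ 2 ≠ 0 := by positivity
      field_simp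
      ring
    rw [hvaleq]
    have : 0 ≤ M - deriv φ τ * p / φ τ := by linarith
    positivity
  have hWmono : MonotoneOn W (Set.Ioo (0 : ℝ) 1) := by
    refine monotoneOn_of_deriv_nonneg (convex_Ioo 0 1) ?_ ?_ ?_
    · intro σ hσ
      obtain ⟨v, hv, _⟩ := hW σ hσ
      exact hv.differentiableAt.continuousAt.continuousWithinAt
    · rw [interior_Ioo]
      intro σ hσ
      obtain ⟨v, hv, _⟩ := hW σ hσ
      exact hv.differentiableAt.differentiableWithinAt
    · rw [interior_Ioo]
      intro σ hσ
      obtain ⟨v, hv, hv0⟩ := hW σ hσ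
      rw [hv.deriv]; exact hv0
  -- the continuous version of W on [-1,1]
  set Wt : ℝ → ℝ := fun σ => ε ^ 2 / 2 * (D σ) ^ 2 - F (h σ) + ε ^ 2 * M * h σ with hWtdef
  have hWtcont : ContinuousOn Wt (Set.Icc (-1 : ℝ) 1) := by
    refine ContinuousOn.add (ContinuousOn.sub ?_ ?_) ?_
    · exact (continuousOn_const.mul (hDcont.pow 2))
    · exact (hF.continuous.comp_continuousOn hcont)
    · exact (continuousOn_const.mul hcont)
  have hWeq : ∀ σ ∈ Set.Ioo (-1 : ℝ) 1, W σ = Wt σ := by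
    intro σ hσ
    simp only [hWdef, hWtdef, hDeq σ hσ]
  -- W τ ≤ Wt 1 for τ ∈ (0,1)
  have hWt1 : Wt 1 ≤ (1 / 2 + M) * ε ^ 2 := by
    have hD1sq : D 1 ^ 2 ≤ 1 := by nlinarith [hq01.1, hq01.2]
    simp only [hWtdef, h1, hF1, mul_one, sub_zero]
    nlinarith [hD1sq, sq_nonneg ε]
  have hbound : ∀ τ ∈ Set.Ioo (0 : ℝ) 1, W τ ≤ Wt 1 := by
    intro τ hτ
    have hne : (𝓝[Set.Ioo τ 1] (1 : ℝ)).NeBot := by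
      rw [← mem_closure_iff_nhdsWithin_neBot, closure_Ioo (ne_of_lt hτ.2)]
      exact ⟨hτ.2.le, le_refl 1⟩
    have hT : Tendsto Wt (𝓝[Set.Ioo τ 1] 1) (𝓝 (Wt 1)) :=
      (hWtcont 1 (by norm_num)).mono_left
        (nhdsWithin_mono 1 (fun σ hσ => ⟨by linarith [hτ.1, hσ.1], hσ.2.le⟩))
    refine ge_of_tendsto hT ?_
    filter_upwards [eventually_mem_nhdsWithin] with σ hσ
    have hσ01 : σ ∈ Set.Ioo (0 : ℝ) 1 := ⟨lt_trans hτ.1 hσ.1, hσ.2⟩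
    calc W τ ≤ W σ := hWmono hτ hσ01 hσ.1.le
      _ = Wt σ := hWeq σ ⟨by linarith [hσ01.1], hσ.2⟩
  -- conclusion on (0,1)
  have hIoo01 : ∀ τ ∈ Set.Ioo (0 : ℝ) 1,
      ε ^ 2 * (deriv h τ) ^ 2 / 2 - F (h τ) ≤ (1 / 2 + M) * ε ^ 2 := by
    intro τ hτ
    have h0τ : 0 ≤ h τ := hge0 τ ⟨hτ.1.le, hτ.2.le⟩
    have := (hbound τ hτ).trans hWt1
    simp only [hWdef] at this
    nlinarith [mul_nonneg (mul_nonneg (sq_nonneg ε) hM0) h0τ]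
  -- conclusion at 0 by continuity
  have h0case : ε ^ 2 * (deriv h 0) ^ 2 / 2 - F (h 0) ≤ (1 / 2 + M) * ε ^ 2 := by
    set Et : ℝ → ℝ := fun σ => ε ^ 2 * (D σ) ^ 2 / 2 - F (h σ) with hEtdef
    have hEtcont : ContinuousOn Et (Set.Icc (-1 : ℝ) 1) := by
      refine ContinuousOn.sub ?_ (hF.continuous.comp_continuousOn hcont)
      exact (continuousOn_const.mul (hDcont.pow 2)).div_const 2
    have hne : (𝓝[Set.Ioo (0 : ℝ) 1] (0 : ℝ)).NeBot := by
      rw [← mem_closure_iff_nhdsWithin_neBot, closure_Ioo (by norm_num : (0 : ℝ) ≠ 1)]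
      constructor <;> norm_num
    have hT : Tendsto Et (𝓝[Set.Ioo (0 : ℝ) 1] 0) (𝓝 (Et 0)) :=
      (hEtcont 0 (by norm_num)).mono_left
        (nhdsWithin_mono 0 (fun σ hσ => ⟨by linarith [hσ.1], hσ.2.le⟩))
    have hEt0 : Et 0 ≤ (1 / 2 + M) * ε ^ 2 := by
      refine le_of_tendsto hT ?_
      filter_upwards [eventually_mem_nhdsWithin] with σ hσ
      have : Et σ = ε ^ 2 * (deriv h σ) ^ 2 / 2 - F (h σ) := by
        simp only [hEtdef, hDeq σ ⟨by linarith [hσ.1], hσ.2⟩]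
      rw [this]; exact hIoo01 σ hσ
    have hD0 : D 0 = deriv h 0 := hDeq 0 (by norm_num)
    simpa only [hEtdef, hD0] using hEt0
  -- full conclusion on (-1,1) using oddness
  intro τ hτ
  rcases lt_trichotomy τ 0 with hlt | heq0 | hgt
  · have hmτ : -τ ∈ Set.Ioo (0 : ℝ) 1 := ⟨by linarith, by linarith [hτ.1]⟩
    have hdm : HasDerivAt h (deriv h (-τ)) (-τ) :=
      hdiffAt (-τ) ⟨by linarith [hmτ.2], hmτ.2⟩
    have hneg : HasDerivAt h (deriv h (-τ)) τ := by
      have h2' : HasDerivAt (fun σ : ℝ => -σ) (-1) τ := (hasDerivAt_id τ).neg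
      have h3' : HasDerivAt (fun σ : ℝ => h (-σ)) (deriv h (-τ) * -1) τ := hdm.comp τ h2'
      have h4' : HasDerivAt (fun σ : ℝ => -(h (-σ))) (deriv h (-τ)) τ := by
        simpa using h3'.fun_neg
      have hfun : (fun σ : ℝ => -(h (-σ))) = h := funext fun σ => by rw [hodd σ]; ring
      rwa [hfun] at h4'
    have hde : deriv h τ = deriv h (-τ) := hneg.deriv
    have hFe : F (h τ) = F (h (-τ)) := by
      rw [hodd τ, hFeven]
    rw [hde, hFe]
    exact hIoo01 (-τ) hmτ
  · rw [heq0]; exact h0case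
  · exact hIoo01 τ ⟨hgt, hτ.2⟩

/-- if `u^ε(x,t) = h_ε(z^ε(x,t))` with `‖∇z^ε‖ ≤ 1`, where `h_ε` is the odd
extension of the profile, then the rescaled discrepancy of `u^ε` is asymptotically
nonpositive, uniformly on `ℝᴺ × (0,∞)`. -/
theorem composed_discrepancy_asymptotically_nonpositive
    (N : ℕ) (hN : 1 ≤ N)
    (F f φ : ℝ → ℝ)
    -- hypotheses (H₀) on the nonlinearity
    (hF : ContDiff ℝ (⊤ : ℕ∞) F)
    (hFeven : ∀ x : ℝ, F (-x) = F x)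
    (hFpos : ∀ x : ℝ, x ≠ -1 → x ≠ 1 → 0 < F x)
    (hF1 : F 1 = 0) (hFm1 : F (-1) = 0)
    (hfF : f = deriv F)
    (hf0 : f 0 = 0) (hf1 : f 1 = 0) (hfm1 : f (-1) = 0)
    (hfneg : ∀ x ∈ Set.Ioo (0 : ℝ) 1, f x < 0)
    (hfpos : ∀ x : ℝ, 1 < x → 0 < f x)
    (hdf0 : deriv f 0 < 0) (hdf1 : 0 < deriv f 1) (hdfm1 : 0 < deriv f (-1))
    (hFconv : ∃ α ∈ Set.Ioo (0 : ℝ) 1, ∃ c > 0, ∀ x : ℝ, α ≤ x → c ≤ deriv (deriv F) x)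
    -- hypotheses on the weight φ
    (hφ : ContDiff ℝ (⊤ : ℕ∞) φ)
    (hφpos : ∀ τ ∈ Set.Icc (0 : ℝ) 1, 0 < φ τ)
    (hφmono : MonotoneOn φ (Set.Icc (0 : ℝ) 1))
    (hφconv : ConvexOn ℝ (Set.Icc (0 : ℝ) 1) φ)
    (hφ0 : 1 ≤ φ 0)
    (hdφ0 : deriv φ 0 = 0)
    (h : ℝ → ℝ → ℝ)
    -- `h ε` is (the odd extension of) the profile solution, `C¹` on `[-1,1]`
    (hsol : ∀ ε ∈ Set.Ioo (0 : ℝ) 1, IsProfileSol f φ ε (h ε))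
    (hodd : ∀ ε ∈ Set.Ioo (0 : ℝ) 1, ∀ τ : ℝ, h ε (-τ) = -(h ε τ))
    (hC1 : ∀ ε ∈ Set.Ioo (0 : ℝ) 1, ContDiffOn ℝ 1 (h ε) (Set.Icc (-1) 1))
    (hmap : ∀ ε ∈ Set.Ioo (0 : ℝ) 1, ∀ τ ∈ Set.Icc (-1 : ℝ) 1, h ε τ ∈ Set.Icc (-1 : ℝ) 1)
    (hmono : ∀ ε ∈ Set.Ioo (0 : ℝ) 1, StrictMonoOn (h ε) (Set.Icc 0 1))
    (hconc : ∀ ε ∈ Set.Ioo (0 : ℝ) 1, ConcaveOn ℝ (Set.Icc 0 1) (h ε))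
    (z : ℝ → EuclideanSpace ℝ (Fin N) → ℝ → ℝ)
    (hzrange : ∀ ε ∈ Set.Ioo (0 : ℝ) 1, ∀ x : EuclideanSpace ℝ (Fin N), ∀ t : ℝ, 0 < t →
      z ε x t ∈ Set.Icc (-1 : ℝ) 1)
    (hzdiff : ∀ ε ∈ Set.Ioo (0 : ℝ) 1, ∀ t : ℝ, 0 < t →
      Differentiable ℝ fun x : EuclideanSpace ℝ (Fin N) => z ε x t)
    (hzgrad : ∀ ε ∈ Set.Ioo (0 : ℝ) 1, ∀ x : EuclideanSpace ℝ (Fin N), ∀ t : ℝ, 0 < t →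
      ‖gradient (fun y => z ε y t) x‖ ≤ 1) :
    ∀ δ > (0 : ℝ), ∃ ε₀ > (0 : ℝ), ∀ ε ∈ Set.Ioo (0 : ℝ) 1, ε < ε₀ →
      ∀ x : EuclideanSpace ℝ (Fin N), ∀ t : ℝ, 0 < t →
        ε / 2 * ‖gradient (fun y => h ε (z ε y t)) x‖ ^ 2 - F (h ε (z ε x t)) / ε ≤ δ := by
  intro δ hδ
  -- F is nonnegative everywhere
  have hFnn : ∀ v : ℝ, 0 ≤ F v := by
    intro v
    by_cases hv1 : v = 1
    · rw [hv1, hF1]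
    by_cases hvm1 : v = -1
    · rw [hvm1, hFm1]
    exact (hFpos v hvm1 hv1).le
  -- construct the constant M
  have hφtop : ContDiff ℝ (⊤ : ℕ∞) φ := hφ.of_le (by simp)
  have hd1 : ContDiff ℝ (⊤ : ℕ∞) (deriv φ) := (contDiff_infty_iff_deriv.mp hφtop).2
  have hd2 : ContDiff ℝ (⊤ : ℕ∞) (deriv (deriv φ)) := (contDiff_infty_iff_deriv.mp hd1).2
  obtain ⟨M₀, hM₀⟩ := (isCompact_Icc (a := (0 : ℝ)) (b := 1)).exists_bound_of_continuousOn
    hd2.continuous.continuousOn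
  set M := max M₀ 0 with hMdef
  have hM0 : 0 ≤ M := le_max_right _ _
  have hMs : ∀ s ∈ Set.Icc (0 : ℝ) 1, deriv φ s ≤ M * s := by
    intro s hs
    rcases eq_or_lt_of_le hs.1 with hse | hslt
    · rw [← hse, hdφ0]; simp
    · obtain ⟨c, hc, hceq⟩ := exists_deriv_eq_slope (deriv φ) hslt
        hd1.continuous.continuousOn (hd1.differentiable (by simp)).differentiableOn
      rw [hdφ0, sub_zero, sub_zero] at hceq
      have hb := hM₀ c ⟨hc.1.le, hc.2.le.trans hs.2⟩
      have hcle : deriv (deriv φ) c ≤ M := le_trans (le_abs_self _) (le_trans hb (le_max_left _ _))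
      have : deriv φ s = deriv (deriv φ) c * s := by
        field_simp at hceq
        linarith [hceq]
      rw [this]
      exact mul_le_mul_of_nonneg_right hcle hs.1
  have hφ'nn : ∀ s ∈ Set.Ioo (0 : ℝ) 1, 0 ≤ deriv φ s := by
    intro s hs
    refine lo_le_deriv_aux hs.2 ((hφ.differentiable (by simp) s).hasDerivAt) ?_
    intro σ hσ
    have hnum : 0 ≤ φ σ - φ s :=
      sub_nonneg.2 (hφmono ⟨hs.1.le, hs.2.le⟩ ⟨by linarith [hs.1, hσ.1], hσ.2.le⟩ hσ.1.le)
    have hden : 0 < σ - s := by linarith [hσ.1]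
    positivity
  -- choose ε₀
  refine ⟨δ / (1 / 2 + M), by positivity, ?_⟩
  intro ε hε hεlt x t ht
  have hε0 : (0 : ℝ) < ε := hε.1
  have hεδ : (1 / 2 + M) * ε ≤ δ := by
    rw [lt_div_iff₀ (by positivity)] at hεlt
    nlinarith
  have key := profile_key F f φ hF hFeven hfF hF1 hφ hφpos hφmono hφ0 M hM0 hMs hφ'nn
    ε hε (h ε) (hsol ε hε) (hodd ε hε) (hC1 ε hε) (hmap ε hε) (hmono ε hε) (hconc ε hε)
  set τ := z ε x t with hτdef
  have hτmem : τ ∈ Set.Icc (-1 : ℝ) 1 := hzrange ε hε x t ht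
  by_cases hτi : τ ∈ Set.Ioo (-1 : ℝ) 1
  · -- interior case: chain rule
    have hdiffh : HasDerivAt (h ε) (deriv (h ε) τ) τ :=
      (((hC1 ε hε).contDiffAt (Icc_mem_nhds hτi.1 hτi.2)).differentiableAt one_ne_zero).hasDerivAt
    set d := deriv (h ε) τ with hddef
    have hzd : DifferentiableAt ℝ (fun y => z ε y t) x := (hzdiff ε hε t ht) x
    have hcomp : HasFDerivAt (fun y => h ε (z ε y t))
        (d • fderiv ℝ (fun y => z ε y t) x) x := by
      have := hdiffh.comp_hasFDerivAt x hzd.hasFDerivAt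
      simpa [Function.comp_def] using this
    have hgrad : gradient (fun y => h ε (z ε y t)) x
        = d • gradient (fun y => z ε y t) x := by
      have hg := (hasFDerivAt_iff_hasGradientAt.1 hcomp).gradient
      rw [hg, map_smul]
      rfl
    rw [hgrad]
    have hnorm : ‖d • gradient (fun y => z ε y t) x‖ ≤ |d| := by
      rw [norm_smul, Real.norm_eq_abs]
      calc |d| * ‖gradient (fun y => z ε y t) x‖ ≤ |d| * 1 :=
            mul_le_mul_of_nonneg_left (hzgrad ε hε x t ht) (abs_nonneg d)
        _ = |d| := mul_one _
    have hsq : ‖d • gradient (fun y => z ε y t) x‖ ^ 2 ≤ d ^ 2 := by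
      have := pow_le_pow_left₀ (norm_nonneg _) hnorm 2
      rwa [sq_abs] at this
    have hkey := key τ hτi
    have e2 : ε / 2 * d ^ 2 - F (h ε τ) / ε ≤ (1 / 2 + M) * ε := by
      have hdiv := (div_le_div_iff_of_pos_right hε0).mpr hkey
      have lhs_eq : (ε ^ 2 * d ^ 2 / 2 - F (h ε τ)) / ε = ε / 2 * d ^ 2 - F (h ε τ) / ε := by
        field_simp
      have rhs_eq : (1 / 2 + M) * ε ^ 2 / ε = (1 / 2 + M) * ε := by
        field_simp
      rwa [lhs_eq, rhs_eq] at hdiv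
    have e1 : ε / 2 * ‖d • gradient (fun y => z ε y t) x‖ ^ 2 ≤ ε / 2 * d ^ 2 :=
      mul_le_mul_of_nonneg_left hsq (by positivity)
    linarith
  · -- boundary case: τ = ±1, gradient vanishes
    have hfd0 : fderiv ℝ (fun y => z ε y t) x = 0 := by
      rcases (lt_or_eq_of_le hτmem.2).symm with hτ1 | hτlt
      · -- τ = 1 : x is a global max of z(·,t)
        have : IsLocalMax (fun y => z ε y t) x := by
          refine Filter.Eventually.of_forall (fun y => ?_)
          have := (hzrange ε hε y t ht).2
          simpa [← hτdef, hτ1] using this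
        exact this.fderiv_eq_zero
      · have hτm1 : τ = -1 := by
          rcases (lt_or_eq_of_le hτmem.1) with hlt | heq
          · exact absurd ⟨hlt, hτlt⟩ hτi
          · exact heq.symm
        have : IsLocalMin (fun y => z ε y t) x := by
          refine Filter.Eventually.of_forall (fun y => ?_)
          have := (hzrange ε hε y t ht).1
          simpa [← hτdef, hτm1] using this
        exact this.fderiv_eq_zero
    have hz0 : HasFDerivAt (fun y => z ε y t) (0 : EuclideanSpace ℝ (Fin N) →L[ℝ] ℝ) x := by
      rw [← hfd0]
      exact ((hzdiff ε hε t ht) x).hasFDerivAt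
    -- Lipschitz bound for h ε on [-1,1]
    set D := derivWithin (h ε) (Set.Icc (-1 : ℝ) 1) with hDdef
    have hDcont : ContinuousOn D (Set.Icc (-1 : ℝ) 1) :=
      (hC1 ε hε).continuousOn_derivWithin (uniqueDiffOn_Icc (by norm_num)) le_rfl
    obtain ⟨C, hC⟩ := (isCompact_Icc (a := (-1 : ℝ)) (b := 1)).exists_bound_of_continuousOn hDcont
    have hLip : ∀ a ∈ Set.Icc (-1 : ℝ) 1, ∀ b ∈ Set.Icc (-1 : ℝ) 1,
        ‖h ε b - h ε a‖ ≤ C * ‖b - a‖ := fun a ha b hb =>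
      Convex.norm_image_sub_le_of_norm_derivWithin_le
        ((hC1 ε hε).differentiableOn one_ne_zero) hC (convex_Icc _ _) ha hb
    have hcomp0 : HasFDerivAt (fun y => h ε (z ε y t))
        (0 : EuclideanSpace ℝ (Fin N) →L[ℝ] ℝ) x := by
      rw [hasFDerivAt_iff_isLittleO_nhds_zero] at hz0 ⊢
      simp only [ContinuousLinearMap.zero_apply, sub_zero] at hz0 ⊢
      have hbig : (fun k : EuclideanSpace ℝ (Fin N) => h ε (z ε (x + k) t) - h ε (z ε x t))
          =O[𝓝 0] (fun k => z ε (x + k) t - z ε x t) := by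
        refine Asymptotics.isBigO_iff.2 ⟨C, Filter.Eventually.of_forall (fun k => ?_)⟩
        have := hLip (z ε x t) (hzrange ε hε x t ht) (z ε (x + k) t) (hzrange ε hε (x + k) t ht)
        simpa using this
      exact hbig.trans_isLittleO hz0
    have hgrad0 : gradient (fun y => h ε (z ε y t)) x = 0 := by
      have hg := (hasFDerivAt_iff_hasGradientAt.1 hcomp0).gradient
      rw [hg, map_zero]
    rw [hgrad0]
    simp only [norm_zero]
    have : 0 ≤ F (h ε τ) / ε := div_nonneg (hFnn _) hε0.le
    nlinarith
end

section
/- Let N ≥ 1, x̄ ∈ ℝᴺ, r > 0, t̄ > 4r², and set Ω₀ := B_{4r}(x̄) × (t̄ − 4r², t̄] and Ω := B_r(x̄) × (t̄ − r², t̄]. Let {u^ε}_{ε ∈ (0,1)} be a family of smooth solutions of the Allen–Cahn equation ∂ₜu = Δu − ε^{-2} f(u) on a neighborhood of Ω₀ such that sup_{ε ∈ (0,1)} ‖u^ε‖_{L^∞(Ω₀)} ≤ C for some C > 0. Then for every σ₀ ∈ (0,2) there exists a constant C₀ = C₀(Ω, C, σ₀) > 0 such that ‖u^ε‖_{L^∞(Ω)}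 ≤ 1 + C₀ ε^{σ₀} for every ε ∈ (0,1). -/
/-- The Euclidean Laplacian of `u : ℝᴺ → ℝ`, as the trace of the second derivative
computed on the standard orthonormal basis. -/
noncomputable def lap {N : ℕ} (u : EuclideanSpace ℝ (Fin N) → ℝ)
    (x : EuclideanSpace ℝ (Fin N)) : ℝ :=
  ∑ i : Fin N, fderiv ℝ (fun y => fderiv ℝ u y (EuclideanSpace.single i 1)) x
    (EuclideanSpace.single i 1)


/- ### Auxiliary lemmas -/

open Set Filter Topology


/-- One-sided derivative sign at a left max. -/
lemma deriv_nonneg_of_left_max {h : ℝ → ℝ} {h' a b : ℝ} (hab : a < b)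
    (hd : HasDerivAt h h' b) (hmax : ∀ t ∈ Set.Icc a b, h t ≤ h b) : 0 ≤ h' := by
  have hs : Tendsto (slope h b) (𝓝[≠] b) (𝓝 h') := hasDerivAt_iff_tendsto_slope.1 hd
  have hs' : Tendsto (slope h b) (𝓝[<] b) (𝓝 h') :=
    hs.mono_left (nhdsWithin_mono _ (fun x hx => ne_of_lt hx))
  have hev : ∀ᶠ t in 𝓝[<] b, 0 ≤ slope h b t := by
    filter_upwards [Ico_mem_nhdsLT_of_mem (⟨hab, le_refl b⟩ : b ∈ Set.Ioc a b)]
      with t ht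
    have h1 : h t ≤ h b := hmax t ⟨ht.1, le_of_lt ht.2⟩
    rw [slope_def_field]
    have h2 : t - b < 0 := by linarith [ht.2]
    have h3 : h t - h b ≤ 0 := by linarith
    have h4 := div_nonneg (neg_nonneg.2 h3) (neg_nonneg.2 h2.le)
    rwa [neg_div_neg_eq] at h4
  exact ge_of_tendsto hs' hev

/-- Second derivative test: local max implies second derivative ≤ 0. -/
lemma second_deriv_nonpos_of_max {g g' : ℝ → ℝ} {L δ : ℝ} (hδ : 0 < δ)
    (hg : ∀ t ∈ Set.Ioo (-δ) δ, HasDerivAt g (g' t) t)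
    (hg' : HasDerivAt g' L 0)
    (hmax : ∀ t ∈ Set.Ioo (-δ) δ, g t ≤ g 0) : L ≤ 0 := by
  by_contra hL
  push_neg at hL
  have h0 : (0:ℝ) ∈ Set.Ioo (-δ) δ := ⟨by linarith, hδ⟩
  have hg'0 : g' 0 = 0 := by
    have hlm : IsLocalMax g 0 := by
      have : Set.Ioo (-δ) δ ∈ 𝓝 (0:ℝ) := Ioo_mem_nhds (by linarith) hδ
      filter_upwards [this] with t ht using hmax t ht
    exact hlm.hasDerivAt_eq_zero (hg 0 h0)
  -- slope of g' at 0 tends to L > 0, so g' > 0 on some (0, η)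
  have hs : Tendsto (slope g' 0) (𝓝[≠] 0) (𝓝 L) := hasDerivAt_iff_tendsto_slope.1 hg'
  have hs' : Tendsto (slope g' 0) (𝓝[>] 0) (𝓝 L) :=
    hs.mono_left (nhdsWithin_mono _ (fun x hx => ne_of_gt hx))
  have hev : ∀ᶠ t in 𝓝[>] (0:ℝ), 0 < slope g' 0 t := hs'.eventually (eventually_gt_nhds hL)
  rcases mem_nhdsGT_iff_exists_Ioo_subset.1 hev with ⟨η, hη, hsub⟩
  have hη0 : 0 < η := by
    rcases hη with hη
    simpa using hη
  set s := min (η/2) (δ/2) with hs_def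
  have hs0 : 0 < s := lt_min (by linarith) (by linarith)
  have hsδ : s < δ := lt_of_le_of_lt (min_le_right _ _) (by linarith)
  have hsη : s < η := lt_of_le_of_lt (min_le_left _ _) (by linarith)
  -- g' positive on (0, s]
  have hpos : ∀ ξ ∈ Set.Ioo (0:ℝ) s, 0 < g' ξ := by
    intro ξ hξ
    have hξη : ξ ∈ Set.Ioo (0:ℝ) η := ⟨hξ.1, lt_trans hξ.2 hsη⟩
    have := hsub hξη
    have hslope : slope g' 0 ξ = g' ξ / ξ := by
      rw [slope_def_field, hg'0]; ring_nf
    have hpos' : 0 < g' ξ / ξ := by rw [← hslope]; exact this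
    have := (div_pos_iff.1 hpos')
    rcases this with ⟨h1,_⟩|⟨_,h2⟩
    · exact h1
    · linarith [hξ.1]
  -- MVT on [0, s]
  have hcont : ContinuousOn g (Set.Icc 0 s) := by
    intro t ht
    exact ((hg t ⟨by linarith [ht.1], lt_of_le_of_lt ht.2 hsδ⟩).continuousAt).continuousWithinAt
  have hdiff : ∀ t ∈ Set.Ioo (0:ℝ) s, HasDerivAt g (g' t) t := fun t ht =>
    hg t ⟨by linarith [ht.1], lt_trans ht.2 hsδ⟩
  obtain ⟨ξ, hξ, hξeq⟩ := exists_hasDerivAt_eq_slope g g' hs0 hcont hdiff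
  have h1 : g s ≤ g 0 := hmax s ⟨by linarith, hsδ⟩
  have h2 : 0 < g' ξ := hpos ξ hξ
  rw [hξeq] at h2
  have : (g s - g 0) / (s - 0) ≤ 0 := div_nonpos_of_nonpos_of_nonneg (by linarith) (by linarith)
  linarith
variable {N : ℕ}

lemma hasDerivAt_comp_line {h : EuclideanSpace ℝ (Fin N) → ℝ}
    {x e : EuclideanSpace ℝ (Fin N)} {s : ℝ}
    (hd : DifferentiableAt ℝ h (x + s • e)) :
    HasDerivAt (fun t => h (x + t • e)) (fderiv ℝ h (x + s • e) e) s := by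
  have hline : HasDerivAt (fun t : ℝ => x + t • e) e s := by
    simpa using ((hasDerivAt_id s).smul_const e).const_add x
  exact hd.hasFDerivAt.comp_hasDerivAt s hline

lemma lap_nonpos_at_max {h : EuclideanSpace ℝ (Fin N) → ℝ}
    {x : EuclideanSpace ℝ (Fin N)} {ρ : ℝ} (hρ : 0 < ρ)
    (hdiff : ∀ y ∈ Metric.ball x ρ, DifferentiableAt ℝ h y)
    (hdiff2 : ∀ e : EuclideanSpace ℝ (Fin N),
      DifferentiableAt ℝ (fun y => fderiv ℝ h y e) x)
    (hmax : ∀ y ∈ Metric.ball x ρ, h y ≤ h x) :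
    lap h x ≤ 0 := by
  have key : ∀ i : Fin N,
      fderiv ℝ (fun y => fderiv ℝ h y (EuclideanSpace.single i 1)) x
        (EuclideanSpace.single i 1) ≤ 0 := by
    intro i
    set e : EuclideanSpace ℝ (Fin N) := EuclideanSpace.single i 1 with he
    have hne : ‖e‖ = 1 := by simp [he, EuclideanSpace.norm_single]
    have hmem : ∀ s : ℝ, s ∈ Set.Ioo (-ρ) ρ → x + s • e ∈ Metric.ball x ρ := by
      intro s hs
      rw [Metric.mem_ball, dist_eq_norm]
      simp only [add_sub_cancel_left]
      rw [norm_smul, hne, mul_one]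
      rw [Real.norm_eq_abs, abs_lt]
      exact ⟨hs.1, hs.2⟩
    apply second_deriv_nonpos_of_max (g := fun t => h (x + t • e))
      (g' := fun t => fderiv ℝ h (x + t • e) e) hρ
    · intro t ht
      exact hasDerivAt_comp_line (hdiff _ (hmem t ht))
    · have hcomp : HasDerivAt (fun t : ℝ => fderiv ℝ h (x + t • e) e)
          (fderiv ℝ (fun y => fderiv ℝ h y e) (x + (0:ℝ) • e) e) 0 :=
        hasDerivAt_comp_line (h := fun y => fderiv ℝ h y e) (by simpa using hdiff2 e)
      simpa using hcomp
    · intro t ht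
      have h1 : h (x + t • e) ≤ h x := hmax _ (hmem t ht)
      simpa using h1
  exact Finset.sum_nonpos fun i _ => key i
lemma diff_fderiv_apply {w : EuclideanSpace ℝ (Fin N) → ℝ} {O : Set (EuclideanSpace ℝ (Fin N))}
    (hO : IsOpen O) (hw : ContDiffOn ℝ (⊤ : ℕ∞) w O) (e : EuclideanSpace ℝ (Fin N))
    {x : EuclideanSpace ℝ (Fin N)} (hx : x ∈ O) :
    DifferentiableAt ℝ (fun y => fderiv ℝ w y e) x := by
  have h1 : ContDiffOn ℝ 1 (fderiv ℝ w) O := hw.fderiv_of_isOpen hO (by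
    exact (WithTop.coe_le_coe.2 le_top))
  have h2 : ContDiffOn ℝ 1 (fun y => fderiv ℝ w y e) O := h1.clm_apply contDiffOn_const
  exact ((h2.differentiableOn one_ne_zero) x hx).differentiableAt (hO.mem_nhds hx)

lemma lap_sub {w v : EuclideanSpace ℝ (Fin N) → ℝ} {O : Set (EuclideanSpace ℝ (Fin N))}
    (hO : IsOpen O) {x : EuclideanSpace ℝ (Fin N)} (hx : x ∈ O)
    (hw : ContDiffOn ℝ (⊤ : ℕ∞) w O) (hv : ContDiffOn ℝ (⊤ : ℕ∞) v O) :
    lap (fun y => w y - v y) x = lap w x - lap v x := by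
  unfold lap
  rw [← Finset.sum_sub_distrib]
  apply Finset.sum_congr rfl
  intro i _
  set e : EuclideanSpace ℝ (Fin N) := EuclideanSpace.single i 1 with he
  have heq : (fun y => fderiv ℝ (fun z => w z - v z) y e)
      =ᶠ[nhds x] (fun y => fderiv ℝ w y e - fderiv ℝ v y e) := by
    filter_upwards [hO.mem_nhds hx] with y hy
    rw [fderiv_fun_sub (((hw.differentiableOn (by simp)) y hy).differentiableAt (hO.mem_nhds hy))
      (((hv.differentiableOn (by simp)) y hy).differentiableAt (hO.mem_nhds hy))]
    simp
  rw [heq.fderiv_eq]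
  rw [fderiv_fun_sub (diff_fderiv_apply hO hw e hx) (diff_fderiv_apply hO hv e hx)]
  simp

lemma lap_neg (w : EuclideanSpace ℝ (Fin N) → ℝ) (x : EuclideanSpace ℝ (Fin N)) :
    lap (fun y => -(w y)) x = - lap w x := by
  unfold lap
  rw [← Finset.sum_neg_distrib]
  apply Finset.sum_congr rfl
  intro i _
  have heq : (fun y => fderiv ℝ (fun z => -(w z)) y (EuclideanSpace.single i 1))
      = (fun y => -(fderiv ℝ w y (EuclideanSpace.single i 1))) := by
    funext y
    rw [fderiv_fun_neg]
    simp
  rw [heq, fderiv_fun_neg]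
  simp
section Barrier

variable (a B k c0 : ℝ) (x₀ : EuclideanSpace ℝ (Fin N))

lemma normsq_hasFDerivAt (y : EuclideanSpace ℝ (Fin N)) :
    HasFDerivAt (fun z : EuclideanSpace ℝ (Fin N) => ‖z - x₀‖ ^ 2)
      ((2 : ℝ) • innerSL ℝ (y - x₀)) y := by
  have hg : HasFDerivAt (fun z : EuclideanSpace ℝ (Fin N) => ‖z - x₀‖ ^ 2)
      ((2 : ℕ) • innerSL ℝ (y - x₀)) y := by
    simpa using ((hasFDerivAt_id y).sub_const x₀).norm_sq
  rwa [show ((2:ℕ) • innerSL ℝ (y - x₀)) = ((2:ℝ) • innerSL ℝ (y - x₀)) by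
    rw [← Nat.cast_smul_eq_nsmul ℝ]; norm_num] at hg

lemma barrier_hasFDerivAt (y : EuclideanSpace ℝ (Fin N)) :
    HasFDerivAt (fun z => c0 + B * Real.exp (a * ‖z - x₀‖ ^ 2 + k))
      ((B * Real.exp (a * ‖y - x₀‖ ^ 2 + k) * (2 * a)) • innerSL ℝ (y - x₀)) y := by
  have hA : HasFDerivAt (fun z => a * ‖z - x₀‖ ^ 2 + k)
      (a • ((2:ℝ) • innerSL ℝ (y - x₀))) y := ((normsq_hasFDerivAt x₀ y).const_mul a).add_const k
  have hfull := (hA.exp.const_mul B).const_add c0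
  refine hfull.congr_fderiv ?_
  simp only [smul_smul]
  congr 1
  ring

lemma barrier_contDiff : ContDiff ℝ (⊤ : ℕ∞) (fun z : EuclideanSpace ℝ (Fin N) =>
    c0 + B * Real.exp (a * ‖z - x₀‖ ^ 2 + k)) := by
  have h1 : ContDiff ℝ (⊤ : ℕ∞) (fun z : EuclideanSpace ℝ (Fin N) => ‖z - x₀‖ ^ 2) :=
    (contDiff_id.sub contDiff_const).norm_sq ℝ
  exact contDiff_const.add (contDiff_const.mul
    (Real.contDiff_exp.comp ((contDiff_const.mul h1).add contDiff_const)))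

lemma barrier_fderiv_apply (y e : EuclideanSpace ℝ (Fin N)) :
    fderiv ℝ (fun z => c0 + B * Real.exp (a * ‖z - x₀‖ ^ 2 + k)) y e
      = B * Real.exp (a * ‖y - x₀‖ ^ 2 + k) * (2 * a) * (inner ℝ (y - x₀) e : ℝ) := by
  rw [(barrier_hasFDerivAt a B k c0 x₀ y).fderiv]
  simp only [ContinuousLinearMap.smul_apply, innerSL_apply_apply, smul_eq_mul]

lemma barrier_lap (x : EuclideanSpace ℝ (Fin N)) :
    lap (fun z => c0 + B * Real.exp (a * ‖z - x₀‖ ^ 2 + k)) x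
      = B * Real.exp (a * ‖x - x₀‖ ^ 2 + k) * (4 * a ^ 2 * ‖x - x₀‖ ^ 2 + 2 * a * N) := by
  unfold lap
  have hGeq : ∀ e : EuclideanSpace ℝ (Fin N),
      (fun y => fderiv ℝ (fun z => c0 + B * Real.exp (a * ‖z - x₀‖ ^ 2 + k)) y e)
        = fun y => (B * Real.exp (a * ‖y - x₀‖ ^ 2 + k) * (2 * a)) * (inner ℝ (y - x₀) e : ℝ) := by
    intro e; funext y; exact barrier_fderiv_apply a B k c0 x₀ y e
  have hsecond : ∀ e : EuclideanSpace ℝ (Fin N),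
      fderiv ℝ (fun y => fderiv ℝ (fun z => c0 + B * Real.exp (a * ‖z - x₀‖ ^ 2 + k)) y e) x e
        = B * Real.exp (a * ‖x - x₀‖ ^ 2 + k) * (2 * a) *
            ((2 * a) * (inner ℝ (x - x₀) e : ℝ) ^ 2 + (inner ℝ e e : ℝ)) := by
    intro e
    rw [hGeq e]
    have hψ : HasFDerivAt (fun y => B * Real.exp (a * ‖y - x₀‖ ^ 2 + k) * (2 * a))
        ((B * Real.exp (a * ‖x - x₀‖ ^ 2 + k) * (2 * a) * (2 * a)) • innerSL ℝ (x - x₀)) x := by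
      have h2 := (barrier_hasFDerivAt a B k c0 x₀ x).mul_const (2 * a)
      have h3 : (fun y => (c0 + B * Real.exp (a * ‖y - x₀‖ ^ 2 + k)) * (2 * a))
          = fun y => B * Real.exp (a * ‖y - x₀‖ ^ 2 + k) * (2 * a) + c0 * (2 * a) := by
        funext y; ring
      rw [h3] at h2
      have h4 := h2.sub_const (c0 * (2 * a))
      simp only [add_sub_cancel_right] at h4
      refine h4.congr_fderiv ?_
      simp only [smul_smul]
      congr 1
      ring
    have hφ : HasFDerivAt (fun y : EuclideanSpace ℝ (Fin N) => (inner ℝ (y - x₀) e : ℝ))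
        (innerSL ℝ e) x := by
      have h1 : HasFDerivAt (fun y : EuclideanSpace ℝ (Fin N) => (inner ℝ e (y - x₀) : ℝ))
          ((innerSL ℝ e).comp (ContinuousLinearMap.id ℝ _)) x :=
        (innerSL ℝ e).hasFDerivAt.comp x ((hasFDerivAt_id x).sub_const x₀)
      have h2 : (fun y : EuclideanSpace ℝ (Fin N) => (inner ℝ (y - x₀) e : ℝ))
          = fun y => (inner ℝ e (y - x₀) : ℝ) := by
        funext y; exact real_inner_comm _ _
      rw [h2]
      simpa using h1
    have hprod := hψ.fun_mul hφ
    rw [hprod.fderiv]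
    simp only [ContinuousLinearMap.add_apply, ContinuousLinearMap.smul_apply,
      innerSL_apply_apply, smul_eq_mul]
    ring
  calc (∑ i : Fin N, fderiv ℝ (fun y =>
        fderiv ℝ (fun z => c0 + B * Real.exp (a * ‖z - x₀‖ ^ 2 + k)) y (EuclideanSpace.single i 1))
        x (EuclideanSpace.single i 1))
      = ∑ i : Fin N, B * Real.exp (a * ‖x - x₀‖ ^ 2 + k) * (2 * a) *
          ((2 * a) * ((x - x₀) i) ^ 2 + 1) := by
        apply Finset.sum_congr rfl
        intro i _
        rw [hsecond (EuclideanSpace.single i 1)]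
        have h1 : (inner ℝ (x - x₀) (EuclideanSpace.single i (1:ℝ)) : ℝ) = (x - x₀) i := by
          rw [EuclideanSpace.inner_single_right]; simp
        have h2 : (inner ℝ (EuclideanSpace.single i (1:ℝ)) (EuclideanSpace.single i (1:ℝ)) : ℝ)
            = 1 := by
          rw [EuclideanSpace.inner_single_right]; simp
        rw [h1, h2]
    _ = B * Real.exp (a * ‖x - x₀‖ ^ 2 + k) * (4 * a ^ 2 * ‖x - x₀‖ ^ 2 + 2 * a * N) := by
        have hnorm : ∑ i : Fin N, ((x - x₀) i) ^ 2 = ‖x - x₀‖ ^ 2 := by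
          rw [EuclideanSpace.norm_eq]
          rw [Real.sq_sqrt (Finset.sum_nonneg fun i _ => sq_nonneg _)]
          apply Finset.sum_congr rfl
          intro i _
          rw [Real.norm_eq_abs, sq_abs]
        have hstep : ∀ i ∈ Finset.univ, B * Real.exp (a * ‖x - x₀‖ ^ 2 + k) * (2 * a) *
            ((2 * a) * ((x - x₀) i) ^ 2 + 1)
            = (B * Real.exp (a * ‖x - x₀‖ ^ 2 + k) * (4 * a ^ 2)) * ((x - x₀) i) ^ 2
              + B * Real.exp (a * ‖x - x₀‖ ^ 2 + k) * (2 * a) := by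
          intro i _; ring
        rw [Finset.sum_congr rfl hstep, Finset.sum_add_distrib, ← Finset.mul_sum,
          Finset.sum_const, Finset.card_univ, hnorm]
        simp only [Fintype.card_fin, nsmul_eq_mul]
        ring

end Barrier
set_option maxHeartbeats 1000000 in
lemma key_comparison {N : ℕ} (f : ℝ → ℝ) (c : ℝ) (hc : 0 < c)
    (hf_lb : ∀ s : ℝ, 1 ≤ s → c * (s - 1) ≤ f s)
    (x₀ : EuclideanSpace ℝ (Fin N)) (r T : ℝ) (hr : 0 < r)
    (ε : ℝ) (hε : 0 < ε)
    (v : EuclideanSpace ℝ (Fin N) → ℝ → ℝ)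
    (U : Set (EuclideanSpace ℝ (Fin N) × ℝ)) (hUo : IsOpen U)
    (hUsub : (Metric.ball x₀ (4 * r) ×ˢ Set.Ioc (T - 4 * r ^ 2) T) ⊆ U)
    (hsmooth : ContDiffOn ℝ (⊤ : ℕ∞) (fun p : EuclideanSpace ℝ (Fin N) × ℝ => v p.1 p.2) U)
    (hpde : ∀ p ∈ U, deriv (fun s => v p.1 s) p.2
      = lap (fun y => v y p.2) p.1 - f (v p.1 p.2) / ε ^ 2)
    (C : ℝ) (hC : 0 < C)
    (hub : ∀ p ∈ Metric.ball x₀ (4 * r) ×ˢ Set.Ioc (T - 4 * r ^ 2) T, v p.1 p.2 ≤ C)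
    (a δ : ℝ) (ha : 0 < a) (hδ : 0 < δ)
    (hslope : C * (2 * a * (N + 1) + 16 * a ^ 2 * r ^ 2) < c * δ / ε ^ 2) :
    ∀ x ∈ Metric.closedBall x₀ (2 * r), ∀ t ∈ Set.Icc (T - 2 * r ^ 2) T,
      v x t ≤ 1 + δ + C * Real.exp (a * ‖x - x₀‖ ^ 2 + (2 * a * (T - t) - 4 * a * r ^ 2)) := by
  set K : Set (EuclideanSpace ℝ (Fin N) × ℝ) :=
    Metric.closedBall x₀ (2 * r) ×ˢ Set.Icc (T - 2 * r ^ 2) T with hK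
  set φ : EuclideanSpace ℝ (Fin N) × ℝ → ℝ := fun p => v p.1 p.2 -
    (1 + δ + C * Real.exp (a * ‖p.1 - x₀‖ ^ 2 + (2 * a * (T - p.2) - 4 * a * r ^ 2))) with hφ
  have hKc : IsCompact K := (isCompact_closedBall _ _).prod isCompact_Icc
  have hKne : K.Nonempty := ⟨(x₀, T), by
    constructor
    · simp [Metric.mem_closedBall]; positivity
    · exact ⟨by nlinarith, le_refl T⟩⟩
  have hKsub : K ⊆ Metric.ball x₀ (4 * r) ×ˢ Set.Ioc (T - 4 * r ^ 2) T := by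
    rintro ⟨x, t⟩ ⟨hx, ht⟩
    refine ⟨?_, ?_, ht.2⟩
    · have := Metric.mem_closedBall.1 hx
      rw [Metric.mem_ball]
      nlinarith [hr]
    · have := ht.1
      nlinarith [sq_nonneg r, hr]
  have hKU : K ⊆ U := fun p hp => hUsub (hKsub hp)
  have hφc : ContinuousOn φ K := by
    apply ContinuousOn.sub
    · exact (hsmooth.continuousOn).mono hKU
    · apply Continuous.continuousOn
      fun_prop
  obtain ⟨p₁, hp₁K, hmax⟩ := hKc.exists_isMaxOn hKne hφc
  by_cases hsign : φ p₁ ≤ 0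
  · intro x hx t ht
    have h1 : φ (x, t) ≤ φ p₁ := hmax ⟨hx, ht⟩
    have h2 : φ (x, t) ≤ 0 := le_trans h1 hsign
    simpa [hφ] using h2
  exfalso
  push_neg at hsign
  obtain ⟨x₁, t₁⟩ := p₁
  have hx₁ : x₁ ∈ Metric.closedBall x₀ (2 * r) := hp₁K.1
  have ht₁ : t₁ ∈ Set.Icc (T - 2 * r ^ 2) T := hp₁K.2
  set q₁ : ℝ := ‖x₁ - x₀‖ ^ 2 with hq₁
  set k : ℝ := 2 * a * (T - t₁) - 4 * a * r ^ 2 with hk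
  set E₁ : ℝ := a * q₁ + k with hE₁
  set u₁ : ℝ := v x₁ t₁ with hu₁
  have hsign' : 1 + δ + C * Real.exp E₁ < u₁ := by
    have : (0 : ℝ) < u₁ - (1 + δ + C * Real.exp E₁) := hsign
    linarith
  have hu₁C : u₁ ≤ C := hub _ (hKsub hp₁K)
  have hexp_pos : 0 < Real.exp E₁ := Real.exp_pos _
  -- boundary exclusion
  have hnorm₁ : ‖x₁ - x₀‖ ≤ 2 * r := by
    have := Metric.mem_closedBall.1 hx₁
    rwa [dist_eq_norm] at this
  have hq₁le : q₁ ≤ 4 * r ^ 2 := by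
    have h1 : ‖x₁ - x₀‖ ^ 2 ≤ (2 * r) ^ 2 := by
      apply sq_le_sq' _ hnorm₁
      linarith [norm_nonneg (x₁ - x₀)]
    nlinarith
  have hVbig : ∀ E : ℝ, 0 ≤ E → C ≤ 1 + δ + C * Real.exp E := by
    intro E hE
    have h1 : (1:ℝ) ≤ Real.exp E := Real.one_le_exp hE
    nlinarith
  have hdist₁ : dist x₁ x₀ < 2 * r := by
    rcases lt_or_eq_of_le (Metric.mem_closedBall.1 hx₁) with h | h
    · exact h
    · exfalso
      have hq4 : q₁ = 4 * r ^ 2 := by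
        rw [hq₁, ← dist_eq_norm, h]; ring
      have hE₁0 : 0 ≤ E₁ := by
        rw [hE₁, hq4, hk]
        have := ht₁.2
        nlinarith
      have := hVbig E₁ hE₁0
      linarith
  have ht₁low : T - 2 * r ^ 2 < t₁ := by
    rcases lt_or_eq_of_le ht₁.1 with h | h
    · exact h
    · exfalso
      have hE₁0 : 0 ≤ E₁ := by
        rw [hE₁, hk, ← h]
        have hq₁0 : 0 ≤ q₁ := sq_nonneg _
        nlinarith
      have := hVbig E₁ hE₁0
      linarith
  -- interior analysis
  have hp₁U : (x₁, t₁) ∈ U := hKU hp₁K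
  -- spatial slice
  set O : Set (EuclideanSpace ℝ (Fin N)) := {y | (y, t₁) ∈ U} with hO
  have hOopen : IsOpen O := hUo.preimage (continuous_id.prodMk continuous_const)
  have hx₁O : x₁ ∈ O := hp₁U
  set w : EuclideanSpace ℝ (Fin N) → ℝ := fun y => v y t₁ with hw
  have hwsm : ContDiffOn ℝ (⊤ : ℕ∞) w O := by
    have hcomp : ContDiff ℝ (⊤ : ℕ∞) (fun y : EuclideanSpace ℝ (Fin N) => (y, t₁)) :=
      contDiff_id.prodMk contDiff_const
    exact hsmooth.comp hcomp.contDiffOn (fun y hy => hy)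
  set Vx : EuclideanSpace ℝ (Fin N) → ℝ :=
    fun y => 1 + δ + C * Real.exp (a * ‖y - x₀‖ ^ 2 + k) with hVx
  have hVxsm : ContDiff ℝ (⊤ : ℕ∞) Vx := barrier_contDiff a C k (1 + δ) x₀
  obtain ⟨ρ, hρpos, hρsub⟩ := Metric.isOpen_iff.1 (hOopen.inter Metric.isOpen_ball) x₁
    ⟨hx₁O, Metric.mem_ball.2 hdist₁⟩
  have hballO : Metric.ball x₁ ρ ⊆ O := fun y hy => (hρsub hy).1
  have hsmaxK : ∀ y ∈ Metric.ball x₁ ρ, (y, t₁) ∈ K := by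
    intro y hy
    have h2 := (hρsub hy).2
    exact ⟨Metric.mem_closedBall.2 (le_of_lt (Metric.mem_ball.1 h2)), ht₁⟩
  have hlap : lap (fun y => w y - Vx y) x₁ ≤ 0 := by
    apply lap_nonpos_at_max hρpos
    · intro y hy
      have h1 : DifferentiableAt ℝ w y :=
        ((hwsm.differentiableOn (by simp)) y (hballO hy)).differentiableAt
          (hOopen.mem_nhds (hballO hy))
      exact h1.sub (hVxsm.differentiable (by simp)).differentiableAt
    · intro e
      exact diff_fderiv_apply hOopen (hwsm.sub hVxsm.contDiffOn) e hx₁O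
    · intro y hy
      have := hmax (hsmaxK y hy)
      simpa [hφ, hVx, hk] using this
  have hlapsub : lap w x₁ - lap Vx x₁ ≤ 0 := by
    rw [← lap_sub hOopen hx₁O hwsm hVxsm.contDiffOn]
    exact hlap
  have hlapVx : lap Vx x₁ = C * Real.exp E₁ * (4 * a ^ 2 * q₁ + 2 * a * N) := by
    rw [hVx]
    rw [barrier_lap a C k (1 + δ) x₀ x₁]
  -- time derivative
  have hjoint : DifferentiableAt ℝ (fun p : EuclideanSpace ℝ (Fin N) × ℝ => v p.1 p.2)
      (x₁, t₁) :=
    ((hsmooth.differentiableOn (by simp)) _ hp₁U).differentiableAt (hUo.mem_nhds hp₁U)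
  have hut : HasDerivAt (fun s => v x₁ s) (deriv (fun s => v x₁ s) t₁) t₁ := by
    have hline : DifferentiableAt ℝ (fun s : ℝ => ((x₁, s) : EuclideanSpace ℝ (Fin N) × ℝ)) t₁ :=
      (differentiableAt_const _).prodMk differentiableAt_id
    exact (DifferentiableAt.comp t₁ hjoint hline).hasDerivAt
  set Vt : ℝ → ℝ :=
    fun s => 1 + δ + C * Real.exp (a * q₁ + (2 * a * (T - s) - 4 * a * r ^ 2)) with hVt
  have hVt' : HasDerivAt Vt (-(2 * a) * (C * Real.exp E₁)) t₁ := by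
    have h1 : HasDerivAt (fun s : ℝ => a * q₁ + (2 * a * (T - s) - 4 * a * r ^ 2))
        (-(2 * a)) t₁ := by
      have h2 : HasDerivAt (fun s : ℝ => (a * q₁ + 2 * a * T - 4 * a * r ^ 2) + (-(2 * a)) * s)
          (-(2 * a)) t₁ := by
        simpa using ((hasDerivAt_id t₁).const_mul (-(2 * a))).const_add
          (a * q₁ + 2 * a * T - 4 * a * r ^ 2)
      have h3 : (fun s : ℝ => a * q₁ + (2 * a * (T - s) - 4 * a * r ^ 2))
          = fun s : ℝ => (a * q₁ + 2 * a * T - 4 * a * r ^ 2) + (-(2 * a)) * s := by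
        funext s; ring
      rwa [h3]
    have h4 := (h1.exp.const_mul C).const_add (1 + δ)
    have h5 : a * q₁ + (2 * a * (T - t₁) - 4 * a * r ^ 2) = E₁ := by rw [hE₁, hk]
    rw [h5] at h4
    refine h4.congr_deriv ?_
    ring
  have htime : 0 ≤ deriv (fun s => v x₁ s) t₁ - (-(2 * a) * (C * Real.exp E₁)) := by
    apply deriv_nonneg_of_left_max (a := T - 2 * r ^ 2) ht₁low (hut.sub hVt')
    intro t htmem
    have hKt : (x₁, t) ∈ K := ⟨hx₁, htmem.1, le_trans htmem.2 ht₁.2⟩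
    have := hmax hKt
    simpa [hφ, hVt, hq₁] using this
  -- PDE substitution
  have hpde₁ : deriv (fun s => v x₁ s) t₁
      = lap (fun y => v y t₁) x₁ - f (v x₁ t₁) / ε ^ 2 := hpde (x₁, t₁) hp₁U
  rw [hpde₁] at htime
  -- f lower bound
  have hu₁1 : 1 + δ ≤ u₁ := by nlinarith
  have hfub : c * δ ≤ f u₁ := by
    have h1 : c * δ ≤ c * (u₁ - 1) := by nlinarith
    exact le_trans h1 (hf_lb u₁ (by linarith))
  have hflb : c * δ / ε ^ 2 ≤ f u₁ / ε ^ 2 :=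
    div_le_div_of_nonneg_right hfub (le_of_lt (pow_pos hε 2))
  -- final contradiction
  rw [← hw] at htime
  rw [show v x₁ t₁ = u₁ from rfl] at htime
  set P : ℝ := C * Real.exp E₁ with hP
  have hP0 : 0 ≤ P := by positivity
  have hPC : P ≤ C := by linarith
  have hlapw : lap w x₁ ≤ P * (4 * a ^ 2 * q₁ + 2 * a * N) := by
    rw [hP]
    calc lap w x₁ ≤ lap Vx x₁ := by linarith
    _ = C * Real.exp E₁ * (4 * a ^ 2 * q₁ + 2 * a * N) := hlapVx
  have hq₁0 : 0 ≤ q₁ := sq_nonneg _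
  have hstep1 : 0 ≤ P * (4 * a ^ 2 * q₁ + 2 * a * N + 2 * a) - c * δ / ε ^ 2 := by
    have : lap w x₁ - f u₁ / ε ^ 2 - -(2 * a) * P ≥ 0 := htime
    nlinarith
  have hstep2 : P * (4 * a ^ 2 * q₁ + 2 * a * N + 2 * a)
      ≤ P * (16 * a ^ 2 * r ^ 2 + 2 * a * N + 2 * a) := by
    apply mul_le_mul_of_nonneg_left _ hP0
    nlinarith [sq_nonneg a]
  have hstep3 : P * (16 * a ^ 2 * r ^ 2 + 2 * a * N + 2 * a)
      ≤ C * (16 * a ^ 2 * r ^ 2 + 2 * a * N + 2 * a) := by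
    apply mul_le_mul_of_nonneg_right hPC
    positivity
  have hring : C * (16 * a ^ 2 * r ^ 2 + 2 * a * N + 2 * a)
      = C * (2 * a * (N + 1) + 16 * a ^ 2 * r ^ 2) := by ring
  linarith
lemma f_lower_bound {F f : ℝ → ℝ} (hF : ContDiff ℝ (⊤ : ℕ∞) F) (hfF : f = deriv F)
    (hf1 : f 1 = 0) {α c : ℝ} (hα : α ∈ Set.Ioo (0:ℝ) 1) (hc : 0 < c)
    (hconv : ∀ x : ℝ, α ≤ x → c ≤ deriv (deriv F) x) :
    ∀ s : ℝ, 1 ≤ s → c * (s - 1) ≤ f s := by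
  intro s hs
  rcases eq_or_lt_of_le hs with h | h
  · rw [← h, hf1]; norm_num
  have hfd : Differentiable ℝ f := by
    rw [hfF]
    have hF' : ContDiff ℝ ((⊤ : ℕ∞) : WithTop ℕ∞) F := hF.of_le (by simp)
    exact (contDiff_infty_iff_deriv.1 hF').2.differentiable (by simp)
  obtain ⟨ξ, hξ, hξeq⟩ := exists_hasDerivAt_eq_slope f (deriv f) h
    (hfd.continuous.continuousOn) (fun x _ => (hfd x).hasDerivAt)
  have hcle : c ≤ deriv f ξ := by
    rw [hfF]
    exact hconv ξ (le_of_lt (lt_of_lt_of_le hα.2 (le_of_lt hξ.1)))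
  rw [hξeq, hf1] at hcle
  rw [le_div_iff₀ (by linarith : (0:ℝ) < s - 1)] at hcle
  linarith
  
lemma f_odd {F f : ℝ → ℝ} (hF : ContDiff ℝ (⊤ : ℕ∞) F) (hfF : f = deriv F)
    (hFeven : ∀ x : ℝ, F (-x) = F x) : ∀ x : ℝ, f (-x) = -f x := by
  intro x
  have h1 : (fun y : ℝ => F (-y)) = F := funext hFeven
  have h2 : deriv (fun y : ℝ => F (-y)) x = -deriv F (-x) := by
    rw [deriv_comp_neg]
  rw [h1] at h2
  rw [hfF]
  linarith

lemma exp_neg_le_pow {y : ℝ} (hy : 0 < y) {n : ℕ} (hn : 1 ≤ n) :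
    Real.exp (-y) ≤ ((n : ℝ) / y) ^ n := by
  have hn' : (0:ℝ) < n := by exact_mod_cast hn
  have h1 : y / n ≤ Real.exp (y / n) := by
    linarith [Real.add_one_le_exp (y / n)]
  have h2 : (y / n) ^ n ≤ Real.exp (y / n) ^ n :=
    pow_le_pow_left₀ (by positivity) h1 n
  have h3 : Real.exp (y / n) ^ n = Real.exp y := by
    rw [← Real.exp_nat_mul]
    congr 1
    field_simp
  rw [h3] at h2
  have h4 : (0:ℝ) < (y / n) ^ n := by positivity
  have h5 : (1:ℝ)/Real.exp y ≤ 1/((y/n)^n) := one_div_le_one_div_of_le h4 h2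
  have h6 : (1:ℝ)/((y/n)^n) = ((n:ℝ)/y)^n := by
    rw [← one_div_pow, one_div_div]
  rw [Real.exp_neg, inv_eq_one_div]
  rw [h6] at h5
  exact h5

set_option maxHeartbeats 1000000 in
/-- interior `L^∞` bound `‖u^ε‖_{L^∞(Ω)} ≤ 1 + C₀ ε^{σ₀}` for uniformly bounded
families of solutions of the Allen–Cahn equation on a neighborhood of
`Ω₀ = B_{4r}(x₀) × (T − 4r², T]`. -/
theorem interior_Linfty_bound
    (N : ℕ) (hN : 1 ≤ N)
    (F f : ℝ → ℝ)
    -- hypotheses (H₀) on the nonlinearity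
    (hF : ContDiff ℝ (⊤ : ℕ∞) F)
    (hFeven : ∀ x : ℝ, F (-x) = F x)
    (hFpos : ∀ x : ℝ, x ≠ -1 → x ≠ 1 → 0 < F x)
    (hF1 : F 1 = 0) (hFm1 : F (-1) = 0)
    (hfF : f = deriv F)
    (hf0 : f 0 = 0) (hf1 : f 1 = 0) (hfm1 : f (-1) = 0)
    (hfneg : ∀ x ∈ Set.Ioo (0 : ℝ) 1, f x < 0)
    (hfpos : ∀ x : ℝ, 1 < x → 0 < f x)
    (hdf0 : deriv f 0 < 0) (hdf1 : 0 < deriv f 1) (hdfm1 : 0 < deriv f (-1))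
    (hFconv : ∃ α ∈ Set.Ioo (0 : ℝ) 1, ∃ c > 0, ∀ x : ℝ, α ≤ x → c ≤ deriv (deriv F) x)
    (x₀ : EuclideanSpace ℝ (Fin N)) (r T : ℝ) (hr : 0 < r) (ht : 4 * r ^ 2 < T)
    (u : ℝ → EuclideanSpace ℝ (Fin N) → ℝ → ℝ)
    -- each `u^ε` is a smooth solution on a neighborhood of `Ω₀`
    (hsol : ∀ ε ∈ Set.Ioo (0 : ℝ) 1, ∃ U : Set (EuclideanSpace ℝ (Fin N) × ℝ),
      IsOpen U ∧ (Metric.ball x₀ (4 * r) ×ˢ Set.Ioc (T - 4 * r ^ 2) T) ⊆ U ∧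
      ContDiffOn ℝ (⊤ : ℕ∞) (fun p : EuclideanSpace ℝ (Fin N) × ℝ => u ε p.1 p.2) U ∧
      ∀ p ∈ U, deriv (fun s => u ε p.1 s) p.2
        = lap (fun y => u ε y p.2) p.1 - f (u ε p.1 p.2) / ε ^ 2)
    (C : ℝ) (hC : 0 < C)
    -- uniform `L^∞` bound on `Ω₀`
    (hbdd : ∀ ε ∈ Set.Ioo (0 : ℝ) 1,
      ∀ p ∈ Metric.ball x₀ (4 * r) ×ˢ Set.Ioc (T - 4 * r ^ 2) T, |u ε p.1 p.2| ≤ C) :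
    ∀ σ₀ ∈ Set.Ioo (0 : ℝ) 2, ∃ C₀ > (0 : ℝ), ∀ ε ∈ Set.Ioo (0 : ℝ) 1,
      ∀ p ∈ Metric.ball x₀ r ×ˢ Set.Ioc (T - r ^ 2) T,
        |u ε p.1 p.2| ≤ 1 + C₀ * ε ^ σ₀ := by
  obtain ⟨α, hα, c, hc, hconv⟩ := hFconv
  have hflb : ∀ s : ℝ, 1 ≤ s → c * (s - 1) ≤ f s := f_lower_bound hF hfF hf1 hα hc hconv
  have hodd := f_odd hF hfF hFeven
  intro σ₀ hσ₀
  set τ : ℝ := 1 - σ₀ / 2 with hτdef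
  have hτ : 0 < τ := by rw [hτdef]; linarith [hσ₀.2]
  set D : ℝ := C * (2 * (N + 1) + 16 * r ^ 2) with hDdef
  have hD : 0 < D := by rw [hDdef]; positivity
  set κ : ℝ := min 1 (c / (2 * D)) with hκdef
  have hκpos : 0 < κ := lt_min one_pos (div_pos hc (by linarith))
  have hκ1 : κ ≤ 1 := min_le_left _ _
  have hκle : κ ≤ c / (2 * D) := min_le_right _ _
  have hκD : κ * D ≤ c / 2 := by
    have h1 := mul_le_mul_of_nonneg_right hκle (le_of_lt hD)
    have h2 : c / (2 * D) * D = c / 2 := by field_simp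
    linarith
  set n : ℕ := ⌈2 / τ⌉₊ with hndef
  have hn1 : 1 ≤ n := by
    rw [hndef]
    exact Nat.one_le_iff_ne_zero.2 (by positivity)
  have hnτ : 2 ≤ (n : ℝ) * τ := by
    have h1 : 2 / τ ≤ (n : ℝ) := Nat.le_ceil (2 / τ)
    calc (2:ℝ) = (2 / τ) * τ := by field_simp
    _ ≤ (n : ℝ) * τ := mul_le_mul_of_nonneg_right h1 hτ.le
  refine ⟨1 + C * ((n : ℝ) / (κ * r ^ 2)) ^ n, by positivity, ?_⟩
  intro ε hε p hp
  obtain ⟨U, hUo, hUsub, hsmooth, hpde⟩ := hsol ε hε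
  have hε0 : 0 < ε := hε.1
  have hε1 : ε < 1 := hε.2
  set δ : ℝ := ε ^ σ₀ with hδdef
  set a : ℝ := κ * ε ^ (σ₀ / 2 - 1) with hadef
  have hδpos : 0 < δ := Real.rpow_pos_of_pos hε0 _
  have hapos : 0 < a := mul_pos hκpos (Real.rpow_pos_of_pos hε0 _)
  -- the key slope inequality
  have hslope : C * (2 * a * (N + 1) + 16 * a ^ 2 * r ^ 2) < c * δ / ε ^ 2 := by
    rw [lt_div_iff₀ (pow_pos hε0 2)]
    have e2 : (ε : ℝ) ^ (2 : ℕ) = ε ^ ((2 : ℕ) : ℝ) := (Real.rpow_natCast ε 2).symm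
    have ha2 : a * ε ^ (2:ℕ) = κ * ε ^ (σ₀ / 2 + 1) := by
      rw [hadef, e2, mul_assoc, ← Real.rpow_add hε0]
      congr 1
      push_cast
      ring
    have ha22 : a ^ 2 * ε ^ (2:ℕ) = κ ^ 2 * δ := by
      rw [hadef, mul_pow, e2, ← Real.rpow_natCast (ε ^ (σ₀/2-1)) 2, ← Real.rpow_mul hε0.le,
        mul_assoc, ← Real.rpow_add hε0, hδdef]
      congr 2
      push_cast
      ring
    have hmono : ε ^ (σ₀ / 2 + 1) ≤ δ := by
      rw [hδdef]
      exact Real.rpow_le_rpow_of_exponent_ge hε0 hε1.le (by linarith [hσ₀.2])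
    have hexpand : C * (2 * a * (N + 1) + 16 * a ^ 2 * r ^ 2) * ε ^ (2:ℕ)
        = 2 * C * (N + 1) * (a * ε ^ (2:ℕ)) + 16 * C * r ^ 2 * (a ^ 2 * ε ^ (2:ℕ)) := by ring
    rw [hexpand, ha2, ha22]
    have h1 : 2 * C * (N + 1) * (κ * ε ^ (σ₀ / 2 + 1)) ≤ 2 * C * (N + 1) * κ * δ := by
      have := mul_le_mul_of_nonneg_left hmono
        (by positivity : (0:ℝ) ≤ 2 * C * (N + 1) * κ)
      linarith [this]
    have h2 : 16 * C * r ^ 2 * (κ ^ 2 * δ) ≤ 16 * C * r ^ 2 * κ * δ := by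
      have hκ2 : κ ^ 2 ≤ κ := by nlinarith
      nlinarith [mul_nonneg (by positivity : (0:ℝ) ≤ 16 * C * r ^ 2 * δ)
        (by nlinarith : (0:ℝ) ≤ κ - κ ^ 2)]
    have h3 : 2 * C * (N + 1) * κ * δ + 16 * C * r ^ 2 * κ * δ
        = (κ * D) * δ := by rw [hDdef]; ring
    have h4 : (κ * D) * δ ≤ (c / 2) * δ :=
      mul_le_mul_of_nonneg_right hκD hδpos.le
    have h5 : (c / 2) * δ < c * δ := by nlinarith [hδpos, mul_pos hc hδpos]
    linarith
  -- apply the comparison lemma to u ε and -(u ε)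
  have hup := key_comparison f c hc hflb x₀ r T hr ε hε0 (u ε) U hUo hUsub hsmooth hpde C hC
    (fun p hp => (abs_le.1 (hbdd ε hε p hp)).2) a δ hapos hδpos hslope
  have hpde' : ∀ p ∈ U, deriv (fun s => -(u ε p.1 s)) p.2
      = lap (fun y => -(u ε y p.2)) p.1 - f (-(u ε p.1 p.2)) / ε ^ 2 := by
    intro p hpU
    rw [hodd, lap_neg, deriv.fun_neg, hpde p hpU]
    ring
  have hdn := key_comparison f c hc hflb x₀ r T hr ε hε0 (fun x t => -(u ε x t)) U hUo hUsub
    hsmooth.neg hpde' C hC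
    (fun p hp => by
      have h := (abs_le.1 (hbdd ε hε p hp)).1
      simp only [neg_le]
      linarith)
    a δ hapos hδpos hslope
  -- conclude on Ω
  obtain ⟨x, t⟩ := p
  obtain ⟨hx, htmem⟩ := hp
  have hxcb : x ∈ Metric.closedBall x₀ (2 * r) := by
    have h1 := Metric.mem_ball.1 hx
    rw [Metric.mem_closedBall]
    linarith
  have htIcc : t ∈ Set.Icc (T - 2 * r ^ 2) T := by
    constructor
    · have := htmem.1
      nlinarith [sq_nonneg r]
    · exact htmem.2
  have hEle : a * ‖x - x₀‖ ^ 2 + (2 * a * (T - t) - 4 * a * r ^ 2) ≤ -(a * r ^ 2) := by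
    have h1 : ‖x - x₀‖ ≤ r := by
      have := Metric.mem_ball.1 hx
      rw [dist_eq_norm] at this
      linarith
    have h2 : ‖x - x₀‖ ^ 2 ≤ r ^ 2 := by
      nlinarith [norm_nonneg (x - x₀)]
    have h3 : T - t < r ^ 2 := by
      have := htmem.1
      linarith
    nlinarith [hapos]
  have hexpE : Real.exp (a * ‖x - x₀‖ ^ 2 + (2 * a * (T - t) - 4 * a * r ^ 2))
      ≤ ((n : ℝ) / (κ * r ^ 2)) ^ n * ε ^ σ₀ := by
    have hy : 0 < a * r ^ 2 := by positivity
    have step1 : Real.exp (a * ‖x - x₀‖ ^ 2 + (2 * a * (T - t) - 4 * a * r ^ 2))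
        ≤ Real.exp (-(a * r ^ 2)) := Real.exp_le_exp.2 hEle
    have step2 : Real.exp (-(a * r ^ 2)) ≤ ((n : ℝ) / (a * r ^ 2)) ^ n :=
      exp_neg_le_pow hy hn1
    have step3 : ((n : ℝ) / (a * r ^ 2)) ^ n
        = ((n : ℝ) / (κ * r ^ 2)) ^ n * (ε ^ τ) ^ n := by
      rw [← mul_pow]
      congr 1
      have hinv : ε ^ (σ₀ / 2 - 1) = (ε ^ τ)⁻¹ := by
        rw [hτdef, ← Real.rpow_neg hε0.le]
        congr 1
        ring
      have hτne : ε ^ τ ≠ 0 := ne_of_gt (Real.rpow_pos_of_pos hε0 _)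
      rw [hadef, hinv]
      field_simp
    have step4 : (ε ^ τ) ^ n = ε ^ (τ * n) := by
      rw [← Real.rpow_natCast (ε ^ τ) n, ← Real.rpow_mul hε0.le]
    have step5 : ε ^ (τ * n) ≤ ε ^ σ₀ :=
      Real.rpow_le_rpow_of_exponent_ge hε0 hε1.le (by
        have h7 := hσ₀.2
        have h8 := hnτ
        linarith)
    calc Real.exp (a * ‖x - x₀‖ ^ 2 + (2 * a * (T - t) - 4 * a * r ^ 2))
        ≤ ((n : ℝ) / (a * r ^ 2)) ^ n := le_trans step1 step2
      _ = ((n : ℝ) / (κ * r ^ 2)) ^ n * (ε ^ τ) ^ n := step3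
      _ = ((n : ℝ) / (κ * r ^ 2)) ^ n * ε ^ (τ * n) := by rw [step4]
      _ ≤ ((n : ℝ) / (κ * r ^ 2)) ^ n * ε ^ σ₀ := by
          apply mul_le_mul_of_nonneg_left step5 (by positivity)
  have hupx := hup x hxcb t htIcc
  have hdnx := hdn x hxcb t htIcc
  have hCexp : C * Real.exp (a * ‖x - x₀‖ ^ 2 + (2 * a * (T - t) - 4 * a * r ^ 2))
      ≤ C * (((n : ℝ) / (κ * r ^ 2)) ^ n * ε ^ σ₀) :=
    mul_le_mul_of_nonneg_left hexpE hC.le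
  set X : ℝ := ((n : ℝ) / (κ * r ^ 2)) ^ n with hXdef
  have hdnx' : -(u ε x t) ≤ 1 + δ + C * Real.exp (a * ‖x - x₀‖ ^ 2
      + (2 * a * (T - t) - 4 * a * r ^ 2)) := hdnx
  have hring : 1 + (1 + C * X) * ε ^ σ₀ = 1 + ε ^ σ₀ + C * (X * ε ^ σ₀) := by ring
  have hδeq : δ = ε ^ σ₀ := hδdef
  rw [abs_le]
  constructor
  · simp only [neg_le]
    have h6 : -(1 + (1 + C * X) * ε ^ σ₀) ≤ u ε x t := by
      rw [hring]
      linarith [hdnx', hCexp, hδeq.le, hδeq.ge]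
    linarith [h6]
  · rw [hring]
    linarith [hupx, hCexp, hδeq.le, hδeq.ge]
end
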